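/- arXiv:1810.02985 — 6 statements merged into one kernel-verified Lean document; each statement's English description precedes it below -/
import Mathlib

section
/- Let R be a discrete valuation ring with uniformizer π, K its quotient field, L = K(α) a finite separable extension with α integral over R, P ∈ R[X] the minimal polynomial of α, A = R[α], and O_L the integral closure of R in L. Let f ∈ R[X] be monic with f̄ dividing P̄ in k[X], write P = fg + πT with T̄ ≠ 0, and let 𝔞 = πA + f(α)A. Let h, U ∈ R[X] satisfy h̄ = f̄/(f̄, T̄) and Ū = lcm(h̄·ḡ, f̄). Then Stab_L(𝔞) = A + (U(α)/π)A, and this is contained in O_L. -/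
/-!
If `x ∈ Stab(𝔞)` then `πx ∈ 𝔞 ⊆ A`, so `x = V(α)/π` for some `V ∈ R[X]`, and `x ∈ Stab(𝔞)` iff
`V(α) ∈ 𝔞` and `f(α)V(α)/π ∈ 𝔞`. As `𝔞` is the image of the ideal `(π, f) ∋ P` of `R[X]`,
`V(α) ∈ 𝔞` iff `f̄ ∣ V̄`. If `f(α)V(α)/π ∈ A`, reducing `fV ∈ πR[X] + PR[X]` modulo `π` gives
`ḡ ∣ V̄`; writing `V = gQ + πD`, the identity `fV = PQ + π(fD - TQ)` shows
`f(α)V(α)/π = (fD - TQ)(α)`, which lies in `𝔞` iff `f̄ ∣ T̄Q̄`, i.e. iff `h̄ ∣ Q̄`. Hence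
`x ∈ Stab(𝔞)` iff `Ū ∣ V̄`, which describes `A + (U(α)/π)A`. Integrality holds because
`Stab(𝔞)` stabilizes the nonzero finitely generated `R`-module `𝔞`.
-/

open Polynomial

/-- Polynomials over a field form a normalized GCD monoid in which `gcd` and `lcm` of nonzero
polynomials are monic. -/
noncomputable instance polyNormalizedGCDMonoid (K : Type*) [Field K] :
    NormalizedGCDMonoid (Polynomial K) :=
  letI := Classical.decEq K
  UniqueFactorizationMonoid.toNormalizedGCDMonoid _

section Reduction

variable {R k : Type*} [CommRing R] [CommRing k] {φ : R →+* k} {π : R}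

theorem Polynomial.map_eq_zero_iff_C_dvd (hφ : RingHom.ker φ = Ideal.span {π}) {V : R[X]} :
    V.map φ = 0 ↔ C π ∣ V := by
  rw [← coe_mapRingHom, ← RingHom.mem_ker, ker_mapRingHom, hφ, Ideal.map_span,
    Set.image_singleton, Ideal.mem_span_singleton]

theorem Polynomial.map_mul_add_C_mul (hπ : φ π = 0) (F Q S : R[X]) :
    (F * Q + C π * S).map φ = F.map φ * Q.map φ := by
  simp [hπ]

theorem Polynomial.map_dvd_map_iff_exists_eq_mul_add_C_mul
    (hφ : RingHom.ker φ = Ideal.span {π}) (hsurj : Function.Surjective φ) {F V : R[X]} :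
    F.map φ ∣ V.map φ ↔ ∃ Q S, V = F * Q + C π * S := by
  have hπ : φ π = 0 := by rw [← RingHom.mem_ker, hφ]; exact Ideal.mem_span_singleton_self π
  constructor
  · rintro ⟨q, hq⟩
    obtain ⟨Q, rfl⟩ := map_surjective φ hsurj q
    obtain ⟨S, hS⟩ := (map_eq_zero_iff_C_dvd hφ).1 (show (V - F * Q).map φ = 0 by simp [hq])
    exact ⟨Q, S, by linear_combination hS⟩
  · rintro ⟨Q, S, rfl⟩
    exact ⟨Q.map φ, map_mul_add_C_mul hπ F Q S⟩

end Reduction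

theorem dvd_mul_iff_of_mul_gcd_eq {M : Type*} [CommMonoidWithZero M] [GCDMonoid M]
    {f t h q : M} (hf : f ≠ 0) (hh : h * gcd f t = f) : f ∣ t * q ↔ h ∣ q := by
  have hd : gcd f t ≠ 0 := fun hd => hf (by rw [← hh, hd, mul_zero])
  rw [← dvd_gcd_mul_iff_dvd_mul]
  nth_rewrite 1 [← hh]
  rw [mul_comm h, mul_dvd_mul_iff_left hd]

theorem Submodule.div_self_le_integralClosure {R L : Type*} [CommRing R] [CommRing L] [IsDomain L]
    [Algebra R L] (M : Submodule R L) (hM : M ≠ ⊥) (hfg : M.FG) :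
    M / M ≤ Subalgebra.toSubmodule (integralClosure R L) := fun x hx =>
  isIntegral_of_smul_mem_submodule M hM hfg x fun _ hy => mem_div_iff_forall_mul_mem.1 hx _ hy

theorem Algebra.mem_adjoin_singleton_iff_exists_aeval {R L : Type*} [CommSemiring R] [Semiring L]
    [Algebra R L] {α z : L} : z ∈ Algebra.adjoin R {α} ↔ ∃ V : R[X], aeval α V = z := by
  rw [adjoin_singleton_eq_range_aeval]
  rfl

namespace Subalgebra

variable {R L : Type*} [CommSemiring R] [CommSemiring L] [Algebra R L]

def spanPair (A : Subalgebra R L) (a b : L) : Submodule R L :=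
  (toSubmodule A).map (LinearMap.mulLeft R a) ⊔ (toSubmodule A).map (LinearMap.mulLeft R b)

variable {A : Subalgebra R L} {a b : L}

theorem mem_spanPair {z : L} : z ∈ A.spanPair a b ↔ ∃ y ∈ A, ∃ w ∈ A, a * y + b * w = z := by
  simp [spanPair, Submodule.mem_sup]

theorem left_mem_spanPair : a ∈ A.spanPair a b :=
  mem_spanPair.2 ⟨1, A.one_mem, 0, A.zero_mem, by simp⟩

theorem right_mem_spanPair : b ∈ A.spanPair a b :=
  mem_spanPair.2 ⟨0, A.zero_mem, 1, A.one_mem, by simp⟩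

theorem mul_mem_spanPair {z y : L} (hz : z ∈ A.spanPair a b) (hy : y ∈ A) :
    z * y ∈ A.spanPair a b := by
  obtain ⟨u, hu, w, hw, rfl⟩ := mem_spanPair.1 hz
  exact mem_spanPair.2 ⟨u * y, A.mul_mem hu hy, w * y, A.mul_mem hw hy, by ring⟩

theorem spanPair_le (ha : a ∈ A) (hb : b ∈ A) : A.spanPair a b ≤ toSubmodule A := fun _ hz => by
  obtain ⟨u, hu, w, hw, rfl⟩ := mem_spanPair.1 hz
  exact A.add_mem (A.mul_mem ha hu) (A.mul_mem hb hw)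

theorem fg_spanPair (hA : (toSubmodule A).FG) : (A.spanPair a b).FG :=
  (hA.map _).sup (hA.map _)

theorem mem_div_spanPair_iff {x : L} :
    x ∈ A.spanPair a b / A.spanPair a b ↔ x * a ∈ A.spanPair a b ∧ x * b ∈ A.spanPair a b := by
  rw [Submodule.mem_div_iff_forall_mul_mem]
  refine ⟨fun hx => ⟨hx a left_mem_spanPair, hx b right_mem_spanPair⟩, fun ⟨ha, hb⟩ z hz => ?_⟩
  obtain ⟨u, hu, w, hw, rfl⟩ := mem_spanPair.1 hz
  rw [mul_add, ← mul_assoc, ← mul_assoc]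
  exact add_mem (mul_mem_spanPair ha hu) (mul_mem_spanPair hb hw)

end Subalgebra

theorem aeval_div_mul_aeval_eq {R L : Type*} [CommRing R] [Field L] [Algebra R L] {π : R}
    {α : L} {f g T V : R[X]} (hπ : algebraMap R L π ≠ 0)
    (hPfg : minpoly R α = f * g + C π * T) {Q D : R[X]} (hV : V = g * Q + C π * D) :
    aeval α V / algebraMap R L π * aeval α f = aeval α (f * D - T * Q) := by
  have hfV : f * V = minpoly R α * Q + C π * (f * D - T * Q) := by
    rw [hV, hPfg]; ring
  have := congrArg (aeval α) hfV
  simp only [map_mul, map_add, minpoly.aeval, aeval_C, zero_mul, zero_add] at this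
  field_simp
  linear_combination this

section Stabilizer

open IsLocalRing Subalgebra

variable {R L : Type*} [CommRing R] [IsDomain R] [IsDiscreteValuationRing R] [Field L]
  [Algebra R L] {π : R} {α : L} {f g T h V : R[X]}

theorem map_residue_dvd_map_residue_iff (hπ : Irreducible π) {F : R[X]} :
    F.map (residue R) ∣ V.map (residue R) ↔ ∃ Q S, V = F * Q + C π * S :=
  map_dvd_map_iff_exists_eq_mul_add_C_mul (by rw [ker_residue, hπ.maximalIdeal_eq])
    residue_surjective

theorem mem_spanPair_iff_exists_aeval (hπ : Irreducible π) {z : L} :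
    z ∈ (Algebra.adjoin R {α}).spanPair (algebraMap R L π) (aeval α f) ↔
      ∃ V : R[X], f.map (residue R) ∣ V.map (residue R) ∧ aeval α V = z := by
  simp only [mem_spanPair, Algebra.mem_adjoin_singleton_iff_exists_aeval,
    map_residue_dvd_map_residue_iff hπ]
  constructor
  · rintro ⟨_, ⟨S, rfl⟩, _, ⟨Q, rfl⟩, rfl⟩
    exact ⟨_, ⟨Q, S, rfl⟩, by simp [add_comm]⟩
  · rintro ⟨_, ⟨Q, S, rfl⟩, rfl⟩
    exact ⟨_, ⟨S, rfl⟩, _, ⟨Q, rfl⟩, by simp [add_comm]⟩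

theorem aeval_mem_spanPair_iff [FaithfulSMul R L] (hπ : Irreducible π) (hα : IsIntegral R α)
    (hfP : f.map (residue R) ∣ (minpoly R α).map (residue R)) :
    aeval α V ∈ (Algebra.adjoin R {α}).spanPair (algebraMap R L π) (aeval α f) ↔
      f.map (residue R) ∣ V.map (residue R) := by
  refine ⟨fun hV => ?_, fun hV => (mem_spanPair_iff_exists_aeval hπ).2 ⟨V, hV, rfl⟩⟩
  obtain ⟨W, hW, hWV⟩ := (mem_spanPair_iff_exists_aeval hπ).1 hV
  obtain ⟨Q, hQ⟩ := minpoly.isIntegrallyClosed_dvd hα (p := V - W) (by simp [hWV])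
  have hVW : V.map (residue R) =
      W.map (residue R) + (minpoly R α).map (residue R) * Q.map (residue R) := by
    rw [← Polynomial.map_mul, ← hQ]; simp
  rw [hVW]
  exact dvd_add hW (hfP.mul_right _)

theorem aeval_div_mul_aeval_mem_spanPair_iff [FaithfulSMul R L] (hπ : Irreducible π)
    (hα : IsIntegral R α) (hf : f.Monic) (hPfg : minpoly R α = f * g + C π * T)
    (hh : h.map (residue R) * gcd (f.map (residue R)) (T.map (residue R)) = f.map (residue R))
    {Q D : R[X]} (hV : V = g * Q + C π * D) :
    aeval α V / algebraMap R L π * aeval α f ∈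
        (Algebra.adjoin R {α}).spanPair (algebraMap R L π) (aeval α f) ↔
      h.map (residue R) ∣ Q.map (residue R) := by
  have hπ' : algebraMap R L π ≠ 0 := by simpa using hπ.ne_zero
  have hfP := (map_residue_dvd_map_residue_iff hπ).2 ⟨g, T, hPfg⟩
  rw [aeval_div_mul_aeval_eq hπ' hPfg hV, aeval_mem_spanPair_iff hπ hα hfP, Polynomial.map_sub,
    Polynomial.map_mul, Polynomial.map_mul, dvd_sub_right (dvd_mul_right _ _),
    dvd_mul_iff_of_mul_gcd_eq (hf.map _).ne_zero hh]

theorem map_residue_dvd_of_aeval_div_mul_aeval_mem_adjoin [FaithfulSMul R L] (hπ : Irreducible π)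
    (hα : IsIntegral R α) (hf : f.Monic) (hPfg : minpoly R α = f * g + C π * T)
    (hV : aeval α V / algebraMap R L π * aeval α f ∈ Algebra.adjoin R {α}) :
    g.map (residue R) ∣ V.map (residue R) := by
  have hρπ : residue R π = 0 := (residue_eq_zero_iff π).2 hπ.not_isUnit
  obtain ⟨W, hW⟩ := Algebra.mem_adjoin_singleton_iff_exists_aeval.1 hV
  obtain ⟨Q, hQ⟩ := minpoly.isIntegrallyClosed_dvd hα (p := f * V - C π * W) (by
    have hπ' : algebraMap R L π ≠ 0 := by simpa using hπ.ne_zero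
    simp only [map_sub, map_mul, aeval_C, hW]
    field_simp
    ring)
  have hfV := congrArg (Polynomial.map (residue R)) (eq_add_of_sub_eq hQ)
  rw [map_mul_add_C_mul hρπ, hPfg, Polynomial.map_mul, map_mul_add_C_mul hρπ, mul_assoc] at hfV
  exact ⟨_, mul_left_cancel₀ (hf.map _).ne_zero hfV⟩

theorem aeval_div_mem_div_spanPair_iff [FaithfulSMul R L] (hπ : Irreducible π)
    (hα : IsIntegral R α) (hf : f.Monic) (hPfg : minpoly R α = f * g + C π * T)
    (hh : h.map (residue R) * gcd (f.map (residue R)) (T.map (residue R)) = f.map (residue R)) :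
    aeval α V / algebraMap R L π ∈
        (Algebra.adjoin R {α}).spanPair (algebraMap R L π) (aeval α f) /
          (Algebra.adjoin R {α}).spanPair (algebraMap R L π) (aeval α f) ↔
      lcm (h.map (residue R) * g.map (residue R)) (f.map (residue R)) ∣ V.map (residue R) := by
  have hπ' : algebraMap R L π ≠ 0 := by simpa using hπ.ne_zero
  have hρπ : residue R π = 0 := (residue_eq_zero_iff π).2 hπ.not_isUnit
  have hfP := (map_residue_dvd_map_residue_iff hπ).2 ⟨g, T, hPfg⟩
  rw [mem_div_spanPair_iff, div_mul_cancel₀ _ hπ', aeval_mem_spanPair_iff hπ hα hfP, lcm_dvd_iff,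
    and_comm]
  refine and_congr_left fun _ => ⟨fun hmem => ?_, fun hdvd => ?_⟩
  · obtain ⟨Q, D, hV⟩ := (map_residue_dvd_map_residue_iff hπ).1
      (map_residue_dvd_of_aeval_div_mul_aeval_mem_adjoin hπ hα hf hPfg
        (spanPair_le (algebraMap_mem _ π) (Polynomial.aeval_mem_adjoin_singleton R α) hmem))
    obtain ⟨q, hq⟩ := (aeval_div_mul_aeval_mem_spanPair_iff hπ hα hf hPfg hh hV).1 hmem
    rw [hV, map_mul_add_C_mul hρπ, hq]
    exact ⟨q, by ring⟩
  · obtain ⟨M, D, hV⟩ :=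
      (map_residue_dvd_map_residue_iff hπ (F := h * g) (V := V)).1 (by rwa [Polynomial.map_mul])
    exact (aeval_div_mul_aeval_mem_spanPair_iff (Q := h * M) (D := D) hπ hα hf hPfg hh
      (by rw [hV]; ring)).2 (by simp)

theorem mem_div_spanPair_iff_exists [FaithfulSMul R L] (hπ : Irreducible π)
    (hα : IsIntegral R α) (hf : f.Monic) (hPfg : minpoly R α = f * g + C π * T)
    (hh : h.map (residue R) * gcd (f.map (residue R)) (T.map (residue R)) = f.map (residue R))
    {x : L} :
    x ∈ (Algebra.adjoin R {α}).spanPair (algebraMap R L π) (aeval α f) /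
          (Algebra.adjoin R {α}).spanPair (algebraMap R L π) (aeval α f) ↔
      ∃ V : R[X], lcm (h.map (residue R) * g.map (residue R)) (f.map (residue R)) ∣
        V.map (residue R) ∧ aeval α V / algebraMap R L π = x := by
  have hπ' : algebraMap R L π ≠ 0 := by simpa using hπ.ne_zero
  refine ⟨fun hx => ?_, ?_⟩
  · have hxπ := spanPair_le (algebraMap_mem _ π) (Polynomial.aeval_mem_adjoin_singleton R α)
      (mem_div_spanPair_iff.1 hx).1
    obtain ⟨V, hV⟩ := Algebra.mem_adjoin_singleton_iff_exists_aeval.1 hxπ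
    obtain rfl : aeval α V / algebraMap R L π = x := by rw [hV, mul_div_cancel_right₀ _ hπ']
    exact ⟨V, (aeval_div_mem_div_spanPair_iff hπ hα hf hPfg hh).1 hx, rfl⟩
  · rintro ⟨V, hV, rfl⟩
    exact (aeval_div_mem_div_spanPair_iff hπ hα hf hPfg hh).2 hV

theorem mem_adjoin_sup_map_mulLeft_div_iff [FaithfulSMul R L] (hπ : Irreducible π) (U : R[X])
    {z : L} :
    z ∈ toSubmodule (Algebra.adjoin R {α}) ⊔ (toSubmodule (Algebra.adjoin R {α})).map
        (LinearMap.mulLeft R (aeval α U * (algebraMap R L π)⁻¹)) ↔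
      ∃ V : R[X], U.map (residue R) ∣ V.map (residue R) ∧ aeval α V / algebraMap R L π = z := by
  have hπ' : algebraMap R L π ≠ 0 := by simpa using hπ.ne_zero
  have hdiv (M S : R[X]) : aeval α (U * M + C π * S) / algebraMap R L π =
      aeval α S + aeval α U * (algebraMap R L π)⁻¹ * aeval α M := by
    simp only [map_add, map_mul, aeval_C]
    field_simp
    ring
  simp only [Submodule.mem_sup, Submodule.mem_map, mem_toSubmodule,
    Algebra.mem_adjoin_singleton_iff_exists_aeval, map_residue_dvd_map_residue_iff hπ,
    LinearMap.mulLeft_apply]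
  constructor
  · rintro ⟨_, ⟨S, rfl⟩, _, ⟨_, ⟨M, rfl⟩, rfl⟩, rfl⟩
    exact ⟨_, ⟨M, S, rfl⟩, by rw [hdiv, mul_assoc]⟩
  · rintro ⟨_, ⟨M, S, rfl⟩, rfl⟩
    exact ⟨_, ⟨S, rfl⟩, _, ⟨_, ⟨M, rfl⟩, rfl⟩, by rw [hdiv, mul_assoc]⟩

end Stabilizer

theorem stmt5_general (R : Type*) [CommRing R] [IsDomain R] [IsDiscreteValuationRing R]
    (π : R) (hπ : Irreducible π)
    (K L : Type*) [Field K] [Field L] [Algebra R K] [IsFractionRing R K]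
    [Algebra K L] [Algebra R L] [IsScalarTower R K L]
    (α : L) (hα : IsIntegral R α)
    (P : R[X]) (hP : P = minpoly R α)
    (A : Subalgebra R L) (hA : A = Algebra.adjoin R {α})
    (f g T h U : R[X]) (hf : f.Monic)
    (hPfg : P = f * g + C π * T)
    (hh : h.map (IsLocalRing.residue R) *
        gcd (f.map (IsLocalRing.residue R)) (T.map (IsLocalRing.residue R)) =
      f.map (IsLocalRing.residue R))
    (hU : U.map (IsLocalRing.residue R) =
      lcm (h.map (IsLocalRing.residue R) * g.map (IsLocalRing.residue R))
        (f.map (IsLocalRing.residue R)))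
    (𝔞 : Submodule R L)
    (h𝔞 : 𝔞 = Submodule.map (LinearMap.mulLeft R (algebraMap R L π))
        (Subalgebra.toSubmodule A) ⊔
      Submodule.map (LinearMap.mulLeft R (aeval α f)) (Subalgebra.toSubmodule A)) :
    𝔞 / 𝔞 = Subalgebra.toSubmodule A ⊔
        Submodule.map (LinearMap.mulLeft R (aeval α U * (algebraMap R L π)⁻¹))
          (Subalgebra.toSubmodule A) ∧
      𝔞 / 𝔞 ≤ Subalgebra.toSubmodule (integralClosure R L) := by
  subst hP hA h𝔞
  have : FaithfulSMul R L := .trans R K L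
  change (Algebra.adjoin R {α}).spanPair _ _ / (Algebra.adjoin R {α}).spanPair _ _ = _ ∧ _
  refine ⟨Submodule.ext fun x => ?_, Submodule.div_self_le_integralClosure _ ?_ ?_⟩
  · rw [mem_div_spanPair_iff_exists hπ hα hf hPfg hh, mem_adjoin_sup_map_mulLeft_div_iff hπ, hU]
  · exact Submodule.ne_bot_iff _ |>.2 ⟨_, Subalgebra.left_mem_spanPair, by simpa using hπ.ne_zero⟩
  · exact Subalgebra.fg_spanPair hα.fg_adjoin_singleton

/-- **Stabilizer lemma, part (ii).** Let `R` be a DVR with uniformizer `π`,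
`L = K(α)` finite separable over the quotient field `K` of `R` with `α` integral over `R`,
`P` the minimal polynomial of `α` over `R`, `A = R[α]`, and `O_L` the integral closure of `R`
in `L`.  Let `f ∈ R[X]` be monic with `f̄ ∣ P̄`, write `P = fg + πT` with `T̄ ≠ 0`, and set
`𝔞 = πA + f(α)A`.  If `h̄ = f̄/(f̄, T̄)` and `Ū = [h̄ḡ, f̄]`, then
`Stab_L(𝔞) = (𝔞 : 𝔞) = A + (U(α)/π)A ⊆ O_L`. -/
theorem stmt5 (R : Type*) [CommRing R] [IsDomain R] [IsDiscreteValuationRing R]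
    (π : R) (hπ : Irreducible π)
    (K L : Type*) [Field K] [Field L] [Algebra R K] [IsFractionRing R K]
    [Algebra K L] [Algebra R L] [IsScalarTower R K L]
    [FiniteDimensional K L] [Algebra.IsSeparable K L]
    (α : L) (hα : IsIntegral R α) (hgen : Algebra.adjoin K {α} = ⊤)
    (P : R[X]) (hP : P = minpoly R α)
    (A : Subalgebra R L) (hA : A = Algebra.adjoin R {α})
    (f g T h U : R[X]) (hf : f.Monic)
    (hfP : f.map (IsLocalRing.residue R) ∣ P.map (IsLocalRing.residue R))
    (hPfg : P = f * g + C π * T)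
    (hT : T.map (IsLocalRing.residue R) ≠ 0)
    (hh : h.map (IsLocalRing.residue R) *
        gcd (f.map (IsLocalRing.residue R)) (T.map (IsLocalRing.residue R)) =
      f.map (IsLocalRing.residue R))
    (hU : U.map (IsLocalRing.residue R) =
      lcm (h.map (IsLocalRing.residue R) * g.map (IsLocalRing.residue R))
        (f.map (IsLocalRing.residue R)))
    (𝔞 : Submodule R L)
    (h𝔞 : 𝔞 = Submodule.map (LinearMap.mulLeft R (algebraMap R L π))
        (Subalgebra.toSubmodule A) ⊔
      Submodule.map (LinearMap.mulLeft R (aeval α f)) (Subalgebra.toSubmodule A)) :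
    𝔞 / 𝔞 = Subalgebra.toSubmodule A ⊔
        Submodule.map (LinearMap.mulLeft R (aeval α U * (algebraMap R L π)⁻¹))
          (Subalgebra.toSubmodule A) ∧
      𝔞 / 𝔞 ≤ Subalgebra.toSubmodule (integralClosure R L) :=
  stmt5_general R π hπ K L α hα P hP A hA f g T h U hf hPfg hh hU 𝔞 h𝔞
end

section
/- Let R be a DVR with uniformizer π, maximal ideal 𝔭, residue field k, quotient field K; let L = K(α) be finite separable with α integral over R, minimal polynomial P, A = R[α], O_L the integral closure of R in L. Suppose f ∈ R[X] is monic with f̄ dividing P̄, P = fg + πT with T̄ ≠ 0 in k[X], and let D̄ = gcd(f̄, ḡ, T̄). Then ν_𝔭(Ind_R(P)) ≥ deg D, where Ind_R(P) = [O_L : A]_R. -/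
/-!
Write `f = D F + π a`, `g = D G + π b`, `T = D S + π c`. Then `β = f(α) G(α) / π` is a root of
`X² - (a G - F b - S)(α) X + (c F G - S a G)(α)`, so `β ∈ O_L`. If `w(α) β ∈ R[α]` for a monic
`w`, then `P ∣ w f G - π z`; reducing modulo `π`, `P̄ = D̄ f̄ Ḡ` divides `w̄ f̄ Ḡ`, so
`deg w ≥ deg D`. Hence the images of `{w(α) β : deg w < i}`, `i = 0, …, deg D`, form a strictly
increasing chain of submodules of `O_L ⧸ R[α]`.
-/

open Polynomial

/-- The length of an `R`-module `M` (the Krull dimension of its submodule lattice).  Over a DVR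
with maximal ideal `𝔭`, `Ind_R(P) = [O_L : R[α]]_R = 𝔭 ^ length (O_L ⧸ R[α])`, so
`ν_𝔭(Ind_R(P)) = length (O_L ⧸ R[α])`. -/
noncomputable def moduleLength (R M : Type*) [Semiring R] [AddCommGroup M] [Module R M] : ℕ∞ :=
  WithBot.unbotD 0 (Order.krullDim (Submodule R M))

open IsLocalRing

theorem natCast_le_moduleLength {R M : Type*} [Semiring R] [AddCommGroup M] [Module R M]
    {d : ℕ} (c : ℕ → Submodule R M) (hc : ∀ i < d, c i < c (i + 1)) :
    (d : ℕ∞) ≤ moduleLength R M :=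
  let chain : LTSeries (Submodule R M) := ⟨d, fun i => c i, fun i => hc i i.isLt⟩
  WithBot.le_unbotD (Order.LTSeries.length_le_krullDim chain)

theorem Subalgebra.aeval_mem_of_mem {R A : Type*} [CommSemiring R] [Semiring A] [Algebra R A]
    {S : Subalgebra R A} {x : A} (hx : x ∈ S) (p : R[X]) : aeval x p ∈ S :=
  Algebra.adjoin_le (Set.singleton_subset_iff.mpr hx) (aeval_mem_adjoin_singleton R x)

theorem isIntegral_of_sq_eq_mul_sub {R A : Type*} [CommRing R] [CommRing A] [Algebra R A]
    {x a b : A} (ha : IsIntegral R a) (hb : IsIntegral R b) (h : x ^ 2 = a * x - b) :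
    IsIntegral R x := by
  let a' : integralClosure R A := ⟨a, ha⟩
  let b' : integralClosure R A := ⟨b, hb⟩
  refine isIntegral_trans (A := integralClosure R A) x ⟨X ^ 2 - C a' * X + C b', ?_, ?_⟩
  · monicity!
  · simp [a', b', h]

theorem sq_div_eq_of_eq_mul_add {L : Type*} [Field L] {π f g t d F G S a b c : L} (hπ : π ≠ 0)
    (hf : f = d * F + π * a) (hg : g = d * G + π * b) (ht : t = d * S + π * c)
    (h : f * g + π * t = 0) :
    (f * G / π) ^ 2 = (a * G - F * b - S) * (f * G / π) - (c * F * G - S * a * G) := by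
  subst hf hg ht
  field_simp
  linear_combination F * G * h

theorem isIntegral_aeval_mul_div_of_eq_mul_add {R L : Type*} [CommRing R] [Field L]
    [Algebra R L] {π : R} (hπ0 : algebraMap R L π ≠ 0) {α : L} (hα : IsIntegral R α)
    {f g T D F G S a b c : R[X]} (hf : f = D * F + C π * a) (hg : g = D * G + C π * b)
    (hT : T = D * S + C π * c) (hroot : aeval α (f * g + C π * T) = 0) :
    IsIntegral R (aeval α (f * G) / algebraMap R L π) := by
  have hint (p : R[X]) : IsIntegral R (aeval α p) := (integralClosure R L).aeval_mem_of_mem hα p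
  refine isIntegral_of_sq_eq_mul_sub (hint (a * G - F * b - S)) (hint (c * F * G - S * a * G)) ?_
  replace hf := congrArg (aeval α) hf
  replace hg := congrArg (aeval α) hg
  replace hT := congrArg (aeval α) hT
  simp only [map_add, map_sub, map_mul, aeval_C] at hf hg hT hroot ⊢
  exact sq_div_eq_of_eq_mul_add hπ0 hf hg hT hroot

section Residue

variable {R : Type*} [CommRing R] [IsLocalRing R] {π : R}

theorem Polynomial.map_residue_add_C_mul (hπ : π ∈ maximalIdeal R) (p a : R[X]) :
    (p + C π * a).map (residue R) = p.map (residue R) := by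
  simp [(residue_eq_zero_iff π).mpr hπ]

theorem Polynomial.exists_eq_mul_add_C_mul_of_map_residue_dvd
    (hπ : maximalIdeal R = Ideal.span {π}) {d p : R[X]}
    (h : d.map (residue R) ∣ p.map (residue R)) : ∃ q r : R[X], p = d * q + C π * r := by
  obtain ⟨q', hq'⟩ := h
  obtain ⟨q, rfl⟩ := map_surjective (residue R) residue_surjective q'
  have hker : p - d * q ∈ RingHom.ker (mapRingHom (residue R)) := by
    simp [RingHom.mem_ker, hq']
  rw [ker_mapRingHom, ker_residue, hπ, Ideal.map_span, Set.image_singleton,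
    Ideal.mem_span_singleton] at hker
  obtain ⟨r, hr⟩ := hker
  exact ⟨q, r, by linear_combination hr⟩

end Residue

theorem Polynomial.map_residue_minpoly_dvd_of_aeval_mul_div_mem_adjoin {R L : Type*} [CommRing R]
    [IsDomain R] [IsIntegrallyClosed R] [IsLocalRing R] [Field L] [Algebra R L]
    [Module.IsTorsionFree R L] {π : R} (hπ : π ∈ maximalIdeal R) (hπ0 : algebraMap R L π ≠ 0)
    {α : L} (hα : IsIntegral R α) {w h : R[X]}
    (hmem : aeval α w * (aeval α h / algebraMap R L π) ∈ Algebra.adjoin R {α}) :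
    (minpoly R α).map (residue R) ∣ (w * h).map (residue R) := by
  rw [Algebra.adjoin_singleton_eq_range_aeval] at hmem
  obtain ⟨z, hz⟩ := hmem
  have hroot : aeval α (w * h - C π * z) = 0 := by
    change aeval α z = _ at hz
    rw [map_sub, map_mul, map_mul, hz, aeval_C]
    field_simp
    ring
  obtain ⟨q, hq⟩ := minpoly.isIntegrallyClosed_dvd hα hroot
  rw [sub_eq_iff_eq_add] at hq
  rw [hq, map_residue_add_C_mul hπ]
  exact (map_dvd _ (dvd_mul_right _ _))

theorem aeval_mul_div_notMem_adjoin_of_natDegree_lt {R L : Type*} [CommRing R] [IsDomain R]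
    [IsIntegrallyClosed R] [IsLocalRing R] [Field L] [Algebra R L] [Module.IsTorsionFree R L]
    {π : R} (hπ : π ∈ maximalIdeal R) (hπ0 : algebraMap R L π ≠ 0) {α : L} (hα : IsIntegral R α)
    {D u w : R[X]} (hD : D.Monic)
    (hP : (minpoly R α).map (residue R) = D.map (residue R) * u.map (residue R))
    (hw : w.Monic) (hwD : w.natDegree < D.natDegree) :
    aeval α w * (aeval α u / algebraMap R L π) ∉ Algebra.adjoin R {α} := by
  intro hmem
  have hu : u.map (residue R) ≠ 0 :=
    right_ne_zero_of_mul (hP ▸ ((minpoly.monic hα).map (residue R)).ne_zero)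
  have hdvd := map_residue_minpoly_dvd_of_aeval_mul_div_mem_adjoin hπ hπ0 hα hmem
  rw [hP, Polynomial.map_mul] at hdvd
  have := natDegree_le_of_dvd ((mul_dvd_mul_iff_right hu).mp hdvd) (hw.map _).ne_zero
  rw [hD.natDegree_map, hw.natDegree_map] at this
  omega

theorem natCast_le_moduleLength_quotient_of_aeval_mul_notMem {R L : Type*} [CommRing R]
    [CommRing L] [Algebra R L] {O A : Subalgebra R L} {α β : L} (hα : α ∈ O) (hβ : β ∈ O)
    {d : ℕ} (h : ∀ w : R[X], w.Monic → w.natDegree < d → aeval α w * β ∉ A) :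
    (d : ℕ∞) ≤ moduleLength R (↥(Subalgebra.toSubmodule O) ⧸
      Submodule.comap (Subalgebra.toSubmodule O).subtype (Subalgebra.toSubmodule A)) := by
  set N := Submodule.comap (Subalgebra.toSubmodule O).subtype (Subalgebra.toSubmodule A)
  let φ : R[X] →ₗ[R] ↥(Subalgebra.toSubmodule O) ⧸ N := N.mkQ ∘ₗ
    ((LinearMap.mulRight R β ∘ₗ (aeval α).toLinearMap).codRestrict _
      fun p => O.mul_mem (O.aeval_mem_of_mem hα p) hβ)
  have hφ : ∀ p, φ p = 0 ↔ aeval α p * β ∈ A := fun p => Submodule.Quotient.mk_eq_zero N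
  refine natCast_le_moduleLength (fun i => (degreeLT R i).map φ) fun i hi => ?_
  refine lt_of_le_of_ne (Submodule.map_mono (degreeLT_mono i.le_succ)) fun heq => ?_
  have hXi : φ (X ^ i) ∈ (degreeLT R i).map φ :=
    heq ▸ Submodule.mem_map_of_mem
      (mem_degreeLT.mpr ((degree_X_pow_le i).trans_lt (by exact_mod_cast i.lt_succ_self)))
  obtain ⟨p, hp, hpX⟩ := hXi
  have hp : p.degree < i := mem_degreeLT.mp hp
  refine h (X ^ i - p) (monic_X_pow_sub hp) ?_ ((hφ _).mp (by rw [map_sub, hpX, sub_self]))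
  exact ((natDegree_sub_le _ _).trans
    (max_le (natDegree_X_pow_le i) (natDegree_le_iff_degree_le.mpr hp.le))).trans_lt hi

theorem stmt7_general (R : Type*) [CommRing R] [IsDomain R] [IsDiscreteValuationRing R]
    (π : R) (hπ : Irreducible π)
    (K L : Type*) [Field K] [Field L] [Algebra R K] [IsFractionRing R K]
    [Algebra K L] [Algebra R L] [IsScalarTower R K L]
    (α : L) (hα : IsIntegral R α)
    (P : R[X]) (hP : P = minpoly R α)
    (A : Subalgebra R L) (hA : A = Algebra.adjoin R {α})
    (f g T D : R[X])
    (hPfg : P = f * g + C π * T)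
    (hD : D.Monic)
    (hDgcd : D.map (IsLocalRing.residue R) =
      gcd (f.map (IsLocalRing.residue R))
        (gcd (g.map (IsLocalRing.residue R)) (T.map (IsLocalRing.residue R)))) :
    (D.natDegree : ℕ∞) ≤
      moduleLength R (↥(Subalgebra.toSubmodule (integralClosure R L)) ⧸
        Submodule.comap (Subalgebra.toSubmodule (integralClosure R L)).subtype
          (Subalgebra.toSubmodule A)) := by
  subst hA hP
  have hπm : π ∈ maximalIdeal R := hπ.maximalIdeal_eq ▸ Ideal.mem_span_singleton_self π
  have hinj : Function.Injective (algebraMap R L) := by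
    rw [IsScalarTower.algebraMap_eq R K L]
    exact (algebraMap K L).injective.comp (IsFractionRing.injective R K)
  have : Module.IsTorsionFree R L := Module.isTorsionFree_iff_algebraMap_injective.mpr hinj
  have hπ0 : algebraMap R L π ≠ 0 := (map_ne_zero_iff _ hinj).mpr hπ.ne_zero
  obtain ⟨F, a, hfF⟩ := exists_eq_mul_add_C_mul_of_map_residue_dvd hπ.maximalIdeal_eq
    (by rw [hDgcd]; exact gcd_dvd_left _ _ : D.map (residue R) ∣ f.map (residue R))
  obtain ⟨G, b, hgG⟩ := exists_eq_mul_add_C_mul_of_map_residue_dvd hπ.maximalIdeal_eq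
    (by rw [hDgcd]; exact (gcd_dvd_right _ _).trans (gcd_dvd_left _ _) :
      D.map (residue R) ∣ g.map (residue R))
  obtain ⟨S, c, hTS⟩ := exists_eq_mul_add_C_mul_of_map_residue_dvd hπ.maximalIdeal_eq
    (by rw [hDgcd]; exact (gcd_dvd_right _ _).trans (gcd_dvd_right _ _) :
      D.map (residue R) ∣ T.map (residue R))
  have hβ := isIntegral_aeval_mul_div_of_eq_mul_add hπ0 hα hfF hgG hTS (hPfg ▸ minpoly.aeval R α)
  have hPbar : (minpoly R α).map (residue R) = D.map (residue R) * (f * G).map (residue R) := by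
    rw [hPfg, map_residue_add_C_mul hπm, Polynomial.map_mul, hgG, map_residue_add_C_mul hπm,
      Polynomial.map_mul, Polynomial.map_mul]
    ring
  exact natCast_le_moduleLength_quotient_of_aeval_mul_notMem hα hβ fun w hw hwD =>
    aeval_mul_div_notMem_adjoin_of_natDegree_lt hπm hπ0 hα hD hPbar hw hwD

/-- Let `R` be a DVR with uniformizer `π` and maximal ideal `𝔭`, `L = K(α)`
finite separable over the quotient field `K` of `R` with `α` integral over `R`, minimal
polynomial `P`, `A = R[α]`, `O_L` the integral closure of `R` in `L`.  Suppose `f ∈ R[X]` is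
monic with `f̄ ∣ P̄`, `P = fg + πT` with `T̄ ≠ 0`, and `D̄ = (f̄, ḡ, T̄)`.  Then
`ν_𝔭(Ind_R(P)) ≥ deg D`, i.e. `length (O_L ⧸ A) ≥ deg D`. -/
theorem stmt7 (R : Type*) [CommRing R] [IsDomain R] [IsDiscreteValuationRing R]
    (π : R) (hπ : Irreducible π)
    (K L : Type*) [Field K] [Field L] [Algebra R K] [IsFractionRing R K]
    [Algebra K L] [Algebra R L] [IsScalarTower R K L]
    [FiniteDimensional K L] [Algebra.IsSeparable K L]
    (α : L) (hα : IsIntegral R α) (hgen : Algebra.adjoin K {α} = ⊤)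
    (P : R[X]) (hP : P = minpoly R α)
    (A : Subalgebra R L) (hA : A = Algebra.adjoin R {α})
    (f g T D : R[X]) (hf : f.Monic)
    (hfP : f.map (IsLocalRing.residue R) ∣ P.map (IsLocalRing.residue R))
    (hPfg : P = f * g + C π * T)
    (hT : T.map (IsLocalRing.residue R) ≠ 0)
    (hD : D.Monic)
    (hDgcd : D.map (IsLocalRing.residue R) =
      gcd (f.map (IsLocalRing.residue R))
        (gcd (g.map (IsLocalRing.residue R)) (T.map (IsLocalRing.residue R)))) :
    (D.natDegree : ℕ∞) ≤
      moduleLength R (↥(Subalgebra.toSubmodule (integralClosure R L)) ⧸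
        Submodule.comap (Subalgebra.toSubmodule (integralClosure R L)).subtype
          (Subalgebra.toSubmodule A)) :=
  stmt7_general R π hπ K L α hα P hP A hA f g T D hPfg hD hDgcd
end

section
/- Let R be a Dedekind ring with quotient field K, L = K(α) a finite separable extension with α integral over R and minimal polynomial P ∈ R[X], O_L the integral closure of R in L. Let 𝔭 be a nonzero prime of R, and let P̄ = ∏_{i=1}^r P̄_i^{l_i} be the monic irreducible factorization of P modulo 𝔭, with monic lifts P_i ∈ R[X]. Suppose P = ∏_i P_i^{l_i} + aT where a ∈ 𝔭 \ 𝔭² and T ∈ R[X] with T̄ ≠ 0. Let t_i be the exact power of P̄_i dividing T̄ and s_i = min(⌊l_i/2⌋, t_i). Then ν_𝔭(Ind_R(P)) ≥ Σ_{i=1}^r s_i · deg(P_i). -/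
open Polynomial

/-!
Put `G = ∏ Pᵢ ^ sᵢ` and `E = ∏ Pᵢ ^ (lᵢ - 2 sᵢ)`, so that `P = E G² + a T`. Because `a`
generates `𝔭` after localizing and `Ḡ ∣ T̄`, there is `u ∉ 𝔭` such that `z = u E(α) G(α) / a`
is a root of a monic quadratic over `R[α]`, hence lies in `O_L`. If `c(α) z ∈ R[α]` then
`P̄ = (EG)‾ Ḡ` divides `ū c̄ (EG)‾`, so `Ḡ ∣ c̄`; hence the classes of `z, α z, …, α^(N-1) z`,
`N = deg Ḡ = Σ sᵢ deg Pᵢ`, span a strictly increasing chain of `N + 1` submodules of the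
localization of `O_L / R[α]` at `𝔭`.
-/

theorem LTSeries.length_le_moduleLength {R M : Type*} [Semiring R] [AddCommGroup M] [Module R M]
    (s : LTSeries (Submodule R M)) : (s.length : ℕ∞) ≤ moduleLength R M := by
  have h := Order.LTSeries.length_le_krullDim s
  unfold moduleLength
  cases hd : Order.krullDim (Submodule R M) with
  | bot => simp [hd] at h
  | coe d => rw [hd] at h; exact_mod_cast h

section Localization

variable {R S M N : Type*} [CommRing R] [CommRing S] [AddCommGroup M] [AddCommGroup N]
  [Module R M] [Module R N] [Algebra R S] [Module S N] [IsScalarTower R S N]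
  (p : Submonoid R) [IsLocalization p S]

theorem Submodule.exists_smul_mem_of_mem_localized' (f : M →ₗ[R] N) [IsLocalizedModule p f]
    {M' : Submodule R M} {x : M}
    (hx : f x ∈ M'.localized' S p f) : ∃ s ∈ p, s • x ∈ M' := by
  obtain ⟨m, hm, s, hms⟩ := hx
  rw [← IsLocalizedModule.mk'_one p f x, IsLocalizedModule.mk'_eq_mk'_iff] at hms
  obtain ⟨c, hc⟩ := hms
  refine ⟨c * s, mul_mem c.2 s.2, ?_⟩
  rw [mul_smul, ← Submonoid.smul_def, ← Submonoid.smul_def, hc, one_smul]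
  exact M'.smul_mem c hm

theorem natCast_le_moduleLength_of_not_smul_mem_span (f : M →ₗ[R] N) [IsLocalizedModule p f]
    (x : ℕ → M) (n : ℕ)
    (hx : ∀ m < n, ∀ s ∈ p, s • x m ∉ Submodule.span R (x '' Set.Iio m)) :
    (n : ℕ∞) ≤ moduleLength S N := by
  let W : ℕ → Submodule S N := fun m => (Submodule.span R (x '' Set.Iio m)).localized' S p f
  have hW : StrictMono fun i : Fin (n + 1) => W i := by
    refine Fin.strictMono_iff_lt_succ.2 fun i => lt_of_le_of_ne ?_ fun h => ?_
    · refine (Submodule.localized'gi S p f).gc.monotone_l (Submodule.span_mono ?_)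
      exact Set.image_mono (Set.Iio_subset_Iio (by simp))
    · have hxi : f (x i) ∈ W (i + 1 : ℕ) :=
        ⟨x i, Submodule.subset_span ⟨i, by simp, rfl⟩, 1, IsLocalizedModule.mk'_one p f _⟩
      simp only [Fin.val_succ, Fin.val_castSucc] at h
      rw [← h] at hxi
      obtain ⟨s, hs, hsx⟩ := Submodule.exists_smul_mem_of_mem_localized' p f hxi
      exact hx i i.2 s hs hsx
  exact (LTSeries.mk n _ hW).length_le_moduleLength

end Localization

theorem Ideal.exists_notMem_dvd_mul_of_notMem_sq {R : Type*} [CommRing R] [IsDedekindDomain R]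
    {𝔭 : Ideal R} {a : R} (ha : a ∈ 𝔭) (ha2 : a ∉ 𝔭 ^ 2) {c : R} (hc : c ∈ 𝔭) :
    ∃ v ∉ 𝔭, a ∣ v * c := by
  obtain ⟨J, hJ⟩ : 𝔭 ∣ Ideal.span {a} :=
    Ideal.dvd_iff_le.2 ((Ideal.span_singleton_le_iff_mem _).2 ha)
  obtain ⟨v, hvJ, hv𝔭⟩ : ∃ v ∈ J, v ∉ 𝔭 := by
    refine SetLike.not_le_iff_exists.1 fun hJ𝔭 => ha2 ?_
    rw [← Ideal.span_singleton_le_iff_mem, hJ, sq]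
    exact Ideal.mul_mono_right hJ𝔭
  refine ⟨v, hv𝔭, Ideal.mem_span_singleton.1 ?_⟩
  rw [hJ, mul_comm v]
  exact Ideal.mul_mem_mul hc hvJ

theorem Polynomial.exists_mem_C_dvd_C_mul {R : Type*} [CommRing R] {M : Submonoid R} {a : R}
    {q : R[X]} (hq : ∀ n, ∃ v ∈ M, a ∣ v * q.coeff n) : ∃ u ∈ M, C a ∣ C u * q := by
  classical
  choose v hvM hv using hq
  refine ⟨∏ n ∈ q.support, v n, prod_mem fun n _ => hvM n,
    (C_dvd_iff_dvd_coeff _ _).2 fun n => ?_⟩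
  rw [coeff_C_mul]
  by_cases hn : n ∈ q.support
  · rw [← Finset.mul_prod_erase _ _ hn, mul_right_comm]
    exact (hv n).mul_right _
  · rw [notMem_support_iff.1 hn, mul_zero]
    exact dvd_zero a

theorem Polynomial.prod_pow_dvd_of_pow_dvd {k ι : Type*} [Field k] [Fintype ι] {p : ι → k[X]}
    (hmon : ∀ i, (p i).Monic) (hirr : ∀ i, Irreducible (p i)) (hinj : Function.Injective p)
    {e : ι → ℕ} {q : k[X]} (h : ∀ i, p i ^ e i ∣ q) : ∏ i, p i ^ e i ∣ q := by
  refine Fintype.prod_dvd_of_coprime (fun i j hij => IsCoprime.pow ?_) h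
  refine (hirr i).coprime_iff_not_dvd.2 fun hdvd => hij (hinj ?_)
  exact eq_of_monic_of_associated (hmon i) (hmon j) ((hirr i).associated_of_dvd (hirr j) hdvd)

theorem IsIntegral.of_mul_self_add_mul_add_eq_zero {R A : Type*} [CommRing R] [CommRing A]
    [Algebra R A] {b c z : A} (hb : IsIntegral R b) (hc : IsIntegral R c)
    (h : z * z + b * z + c = 0) : IsIntegral R z := by
  let b' : integralClosure R A := ⟨b, hb⟩
  let c' : integralClosure R A := ⟨c, hc⟩
  refine isIntegral_trans z ⟨X ^ 2 + C b' * X + C c', by monicity!, ?_⟩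
  simpa [sq] using h

theorem LinearMap.exists_degree_lt_and_apply_C_mul_X_pow_sub_eq_zero {R M : Type*} [CommRing R]
    [AddCommGroup M] [Module R M] (φ : R[X] →ₗ[R] M) {m : ℕ} {s : R}
    (h : s • φ (X ^ m) ∈ Submodule.span R ((fun j => φ (X ^ j)) '' Set.Iio m)) :
    ∃ q : R[X], q.degree < m ∧ φ (C s * X ^ m - q) = 0 := by
  classical
  have hspan :
      (fun j => φ (X ^ j)) '' Set.Iio m = φ '' ((fun j => (X : R[X]) ^ j) '' Set.Iio m) :=
    (Set.image_image _ _ _).symm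
  rw [hspan, Submodule.span_image, ← Finset.coe_range, ← Finset.coe_image,
    ← degreeLT_eq_span_X_pow] at h
  obtain ⟨q, hq, hφq⟩ := h
  refine ⟨q, mem_degreeLT.1 hq, ?_⟩
  rw [map_sub, hφq, ← smul_eq_C_mul, map_smul, sub_self]

section Index

variable {R L : Type*} [CommRing R] [Field L] [Algebra R L] {α : L}
  {𝔭 : Ideal R} [𝔭.IsPrime]

local notation "κ" => Ideal.Quotient.mk 𝔭

theorem exists_isIntegral_mul_eq_mul_aeval (hα : IsIntegral R α) {a : R}
    (ha0 : algebraMap R L a ≠ 0) (hloc : ∀ c ∈ 𝔭, ∃ v ∉ 𝔭, a ∣ v * c) {E G T : R[X]}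
    (hroot : aeval α (E * G ^ 2 + C a * T) = 0) (hGT : G.map κ ∣ T.map κ) :
    ∃ u ∉ 𝔭, ∃ z : L, IsIntegral R z ∧
      algebraMap R L a * z = algebraMap R L u * aeval α (E * G) := by
  obtain ⟨W', hW'⟩ := hGT
  obtain ⟨W, rfl⟩ := map_surjective κ Ideal.Quotient.mk_surjective W'
  have hcoeff : ∀ n, (E * T - E * G * W).coeff n ∈ 𝔭 := by
    intro n
    rw [← Ideal.Quotient.eq_zero_iff_mem, ← coeff_map]
    simp [Polynomial.map_sub, Polynomial.map_mul, hW', mul_assoc]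
  obtain ⟨u, hu, S, hS⟩ := exists_mem_C_dvd_C_mul (M := 𝔭.primeCompl) fun n =>
    hloc _ (hcoeff n)
  have hint : ∀ q : R[X], IsIntegral R (aeval α q) := fun q =>
    adjoin_le_integralClosure hα (aeval_mem_adjoin_singleton R α)
  refine ⟨u, hu, algebraMap R L u * aeval α (E * G) / algebraMap R L a,
    .of_mul_self_add_mul_add_eq_zero (hint (C u * W)) (hint (C u * S)) ?_,
    mul_div_cancel₀ _ ha0⟩
  -- `a² (z² + u W(α) z + u S(α)) = u² E(α) (E G² + a T)(α) - a u (u (E T - E G W) - a S)(α)`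
  have hS' := congrArg (aeval α) hS
  simp only [map_mul, map_add, map_sub, map_pow, aeval_C] at hroot hS' ⊢
  field_simp
  linear_combination (algebraMap R L u) ^ 2 * aeval α E * hroot
    - algebraMap R L a * algebraMap R L u * hS'

theorem natDegree_le_of_aeval_mul_mem_adjoin [IsDomain R] [IsIntegrallyClosed R]
    [Module.IsTorsionFree R L] (hα : IsIntegral R α) {a u : R} (ha : a ∈ 𝔭) (hu : u ∉ 𝔭)
    {F G c : R[X]} {z : L} (hz : algebraMap R L a * z = algebraMap R L u * aeval α F)
    (hP : (minpoly R α).map κ = F.map κ * G.map κ) (hF : F.map κ ≠ 0)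
    (hc : aeval α c * z ∈ Algebra.adjoin R {α}) (hc0 : c.map κ ≠ 0) :
    (G.map κ).natDegree ≤ (c.map κ).natDegree := by
  rw [Algebra.adjoin_singleton_eq_range_aeval] at hc
  obtain ⟨h, hh⟩ := hc
  have hroot : aeval α (C u * (c * F) - C a * h) = 0 := by
    simp only [map_sub, map_mul, aeval_C]
    rw [AlgHom.toRingHom_eq_coe, RingHom.coe_coe] at hh
    rw [hh]
    linear_combination (aeval α c) * hz.symm
  obtain ⟨q, hq⟩ := minpoly.isIntegrallyClosed_dvd hα hroot
  have hmap : F.map κ * (C (κ u) * c.map κ) = F.map κ * (G.map κ * q.map κ) := by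
    have := congrArg (Polynomial.map κ) hq
    simp only [Polynomial.map_sub, Polynomial.map_mul, Polynomial.map_C,
      Ideal.Quotient.eq_zero_iff_mem.2 ha, C_0, zero_mul, sub_zero, hP] at this
    linear_combination this
  have hu' : κ u ≠ 0 := fun h0 => hu (Ideal.Quotient.eq_zero_iff_mem.1 h0)
  calc (G.map κ).natDegree ≤ (C (κ u) * c.map κ).natDegree :=
        natDegree_le_of_dvd ⟨_, mul_left_cancel₀ hF hmap⟩ (mul_ne_zero (C_ne_zero.2 hu') hc0)
    _ = (c.map κ).natDegree := natDegree_C_mul hu'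

theorem natDegree_le_moduleLength_of_minpoly_eq [IsDomain R] [IsIntegrallyClosed R]
    [Module.IsTorsionFree R L] (hα : IsIntegral R α) {a : R} (ha : a ∈ 𝔭) (ha0 : a ≠ 0)
    (hloc : ∀ c ∈ 𝔭, ∃ v ∉ 𝔭, a ∣ v * c) {E G T : R[X]}
    (hP : minpoly R α = E * G ^ 2 + C a * T) (hEG : (E * G).map κ ≠ 0)
    (hGT : G.map κ ∣ T.map κ) :
    ((G.map κ).natDegree : ℕ∞) ≤
      moduleLength (Localization.AtPrime 𝔭)
        (LocalizedModule 𝔭.primeCompl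
          (↥(Subalgebra.toSubmodule (integralClosure R L)) ⧸
            Submodule.comap (Subalgebra.toSubmodule (integralClosure R L)).subtype
              (Subalgebra.toSubmodule (Algebra.adjoin R {α})))) := by
  have ha0' : algebraMap R L a ≠ 0 := by simpa using ha0
  obtain ⟨u, hu, z, hz, hza⟩ :=
    exists_isIntegral_mul_eq_mul_aeval hα ha0' hloc (hP ▸ minpoly.aeval R α) hGT
  set O := Subalgebra.toSubmodule (integralClosure R L)
  set A := Submodule.comap O.subtype (Subalgebra.toSubmodule (Algebra.adjoin R {α}))
  have hzO : ∀ q : R[X], aeval α q * z ∈ O := fun q =>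
    (adjoin_le_integralClosure hα (aeval_mem_adjoin_singleton R α)).mul hz
  let φ : R[X] →ₗ[R] O ⧸ A :=
    A.mkQ ∘ₗ (LinearMap.mulRight R z ∘ₗ (aeval α).toLinearMap).codRestrict O hzO
  have hφ : ∀ q, φ q = 0 → aeval α q * z ∈ Algebra.adjoin R {α} := fun q hq =>
    (Submodule.Quotient.mk_eq_zero A).1 hq
  have hPmap : (minpoly R α).map κ = (E * G).map κ * G.map κ := by
    simp only [hP, Polynomial.map_add, Polynomial.map_mul, Polynomial.map_pow, map_C,
      Ideal.Quotient.eq_zero_iff_mem.2 ha, map_zero, zero_mul, add_zero]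
    ring
  refine natCast_le_moduleLength_of_not_smul_mem_span 𝔭.primeCompl
    (LocalizedModule.mkLinearMap 𝔭.primeCompl _) (fun j => φ (X ^ j)) _
    fun m hm v hv hmem => ?_
  obtain ⟨q, hq, hφq⟩ := φ.exists_degree_lt_and_apply_C_mul_X_pow_sub_eq_zero hmem
  have hv' : κ v ≠ 0 := fun h0 => hv (Ideal.Quotient.eq_zero_iff_mem.1 h0)
  have hdeg : ((C v * X ^ m - q).map κ).degree = (m : WithBot ℕ) := by
    rw [Polynomial.map_sub, Polynomial.map_mul, Polynomial.map_C, Polynomial.map_pow, map_X,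
      degree_sub_eq_left_of_degree_lt] <;> rw [degree_C_mul_X_pow m hv']
    exact (degree_map_le).trans_lt hq
  have hle := natDegree_le_of_aeval_mul_mem_adjoin hα ha hu hza hPmap hEG (hφ _ hφq)
    fun h0 => by simp [h0] at hdeg
  rw [natDegree_eq_of_degree_eq_some hdeg] at hle
  omega

end Index

theorem stmt9_general (R : Type*) [CommRing R] [IsDedekindDomain R]
    (K L : Type*) [Field K] [Field L] [Algebra R K] [IsFractionRing R K]
    [Algebra K L] [Algebra R L] [IsScalarTower R K L]
    (α : L) (hα : IsIntegral R α)
    (P : R[X]) (hP : P = minpoly R α)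
    (𝔭 : Ideal R) [𝔭.IsPrime] (h𝔭 : 𝔭 ≠ ⊥)
    (r : ℕ) (Pl : Fin r → R[X]) (l t : Fin r → ℕ)
    (hmon : ∀ i, (Pl i).Monic)
    (hirr : ∀ i, Irreducible ((Pl i).map (Ideal.Quotient.mk 𝔭)))
    (hdist : ∀ i j, i ≠ j →
      (Pl i).map (Ideal.Quotient.mk 𝔭) ≠ (Pl j).map (Ideal.Quotient.mk 𝔭))
    (a : R) (ha : a ∈ 𝔭) (ha2 : a ∉ 𝔭 ^ 2) (T : R[X])
    (hfact : P = (∏ i, Pl i ^ l i) + C a * T)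
    (ht : ∀ i, ((Pl i).map (Ideal.Quotient.mk 𝔭)) ^ t i ∣ T.map (Ideal.Quotient.mk 𝔭) ∧
      ¬ ((Pl i).map (Ideal.Quotient.mk 𝔭)) ^ (t i + 1) ∣ T.map (Ideal.Quotient.mk 𝔭)) :
    ((∑ i, min (l i / 2) (t i) * (Pl i).natDegree : ℕ) : ℕ∞) ≤
      moduleLength (Localization.AtPrime 𝔭)
        (LocalizedModule 𝔭.primeCompl
          (↥(Subalgebra.toSubmodule (integralClosure R L)) ⧸
            Submodule.comap (Subalgebra.toSubmodule (integralClosure R L)).subtype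
              (Subalgebra.toSubmodule (Algebra.adjoin R {α})))) := by
  have : Module.IsTorsionFree R L := Module.IsTorsionFree.trans_faithfulSMul R K L
  set s : Fin r → ℕ := fun i => min (l i / 2) (t i)
  set G := ∏ i, Pl i ^ s i
  set E := ∏ i, Pl i ^ (l i - 2 * s i)
  have hmonE : E.Monic := monic_prod_of_monic _ _ fun i _ => (hmon i).pow _
  have hmonG : G.Monic := monic_prod_of_monic _ _ fun i _ => (hmon i).pow _
  have hprod : ∏ i, Pl i ^ l i = E * G ^ 2 := by
    rw [← Finset.prod_pow, ← Finset.prod_mul_distrib]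
    refine Finset.prod_congr rfl fun i _ => ?_
    rw [← pow_mul, ← pow_add]
    have : s i ≤ l i / 2 := min_le_left _ _
    congr 1
    omega
  have hGT : G.map (Ideal.Quotient.mk 𝔭) ∣ T.map (Ideal.Quotient.mk 𝔭) := by
    have := Ideal.IsPrime.isMaximal ‹_› h𝔭
    let _ := Ideal.Quotient.field 𝔭
    have := prod_pow_dvd_of_pow_dvd (e := s) (fun i => (hmon i).map (Ideal.Quotient.mk 𝔭)) hirr
      (fun i j hij => Classical.byContradiction fun h => hdist i j h hij)
      fun i => (pow_dvd_pow _ (min_le_right _ _)).trans (ht i).1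
    simpa only [G, Polynomial.map_prod, Polynomial.map_pow] using this
  have hdeg : (G.map (Ideal.Quotient.mk 𝔭)).natDegree = ∑ i, s i * (Pl i).natDegree := by
    rw [hmonG.natDegree_map, natDegree_prod_of_monic _ _ fun i _ => (hmon i).pow _]
    simp only [natDegree_pow]
  rw [← hdeg]
  refine natDegree_le_moduleLength_of_minpoly_eq hα ha (fun h0 => ha2 (h0 ▸ zero_mem _))
    (fun c hc => Ideal.exists_notMem_dvd_mul_of_notMem_sq ha ha2 hc) (by rw [← hP, hfact, hprod])
    ((hmonE.mul hmonG).map _).ne_zero hGT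

/-- **Main theorem.** Let `R` be a Dedekind ring with quotient field `K`,
`L = K(α)` finite separable with `α` integral over `R` with minimal polynomial `P ∈ R[X]`,
`O_L` the integral closure of `R` in `L`.  Let `𝔭` be a nonzero prime of `R`, let
`P̄ = ∏ P̄ᵢ^{lᵢ}` be the monic irreducible factorization of `P` mod `𝔭`, and suppose
`P = ∏ Pᵢ^{lᵢ} + aT` with `a ∈ 𝔭 ∖ 𝔭²` and `T̄ ≠ 0`.  If `tᵢ` is the exact power of `P̄ᵢ`
dividing `T̄` and `sᵢ = min(⌊lᵢ/2⌋, tᵢ)`, then `ν_𝔭(Ind_R(P)) ≥ Σ sᵢ · deg Pᵢ`. -/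
theorem stmt9 (R : Type*) [CommRing R] [IsDomain R] [IsDedekindDomain R]
    (K L : Type*) [Field K] [Field L] [Algebra R K] [IsFractionRing R K]
    [Algebra K L] [Algebra R L] [IsScalarTower R K L]
    [FiniteDimensional K L] [Algebra.IsSeparable K L]
    (α : L) (hα : IsIntegral R α) (hgen : Algebra.adjoin K {α} = ⊤)
    (P : R[X]) (hP : P = minpoly R α)
    (𝔭 : Ideal R) [𝔭.IsPrime] (h𝔭 : 𝔭 ≠ ⊥)
    (r : ℕ) (Pl : Fin r → R[X]) (l t : Fin r → ℕ)
    (hmon : ∀ i, (Pl i).Monic)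
    (hirr : ∀ i, Irreducible ((Pl i).map (Ideal.Quotient.mk 𝔭)))
    (hdist : ∀ i j, i ≠ j →
      (Pl i).map (Ideal.Quotient.mk 𝔭) ≠ (Pl j).map (Ideal.Quotient.mk 𝔭))
    (a : R) (ha : a ∈ 𝔭) (ha2 : a ∉ 𝔭 ^ 2) (T : R[X])
    (hfact : P = (∏ i, Pl i ^ l i) + C a * T)
    (hT : T.map (Ideal.Quotient.mk 𝔭) ≠ 0)
    (ht : ∀ i, ((Pl i).map (Ideal.Quotient.mk 𝔭)) ^ t i ∣ T.map (Ideal.Quotient.mk 𝔭) ∧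
      ¬ ((Pl i).map (Ideal.Quotient.mk 𝔭)) ^ (t i + 1) ∣ T.map (Ideal.Quotient.mk 𝔭)) :
    ((∑ i, min (l i / 2) (t i) * (Pl i).natDegree : ℕ) : ℕ∞) ≤
      moduleLength (Localization.AtPrime 𝔭)
        (LocalizedModule 𝔭.primeCompl
          (↥(Subalgebra.toSubmodule (integralClosure R L)) ⧸
            Submodule.comap (Subalgebra.toSubmodule (integralClosure R L)).subtype
              (Subalgebra.toSubmodule (Algebra.adjoin R {α})))) :=
  stmt9_general R K L α hα P hP 𝔭 h𝔭 r Pl l t hmon hirr hdist a ha ha2 T hfact ht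
end

section
/- Let P(X) = X^n + aX^m + b ∈ ℤ[X] be irreducible with n > 1, n ≥ m ≥ 1, and let p be a prime with ν_p(a) = 1 and p² | b. Then p divides the index [O_L : ℤ[α]], where α is a root of P and O_L is the ring of integers of ℚ(α); in particular ℤ[α] ≠ O_L. -/
open Polynomial

/-- **Trinomial application over `ℤ`.** Let `P = X^n + aX^m + b ∈ ℤ[X]` be
irreducible with `n > 1`, `n ≥ m ≥ 1`, and let `p` be a prime with `ν_p(a) = 1` and `p² ∣ b`.
Then `p` divides the index `[O_L : ℤ[α]]` (the cardinality of `O_L ⧸ ℤ[α]`) where `α` is a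
root of `P` and `O_L` the ring of integers of `ℚ(α)`; in particular `ℤ[α] ≠ O_L`. -/
theorem stmt11 (n m : ℕ) (hn : 1 < n) (hm : 1 ≤ m) (hmn : m ≤ n)
    (a b : ℤ) (P : ℤ[X]) (hP : P = X ^ n + C a * X ^ m + C b) (hPirr : Irreducible P)
    (p : ℕ) (hp : p.Prime) (hpa : (p : ℤ) ∣ a) (hpa2 : ¬ ((p : ℤ) ^ 2 ∣ a))
    (hpb : (p : ℤ) ^ 2 ∣ b)
    (K : Type*) [Field K] [NumberField K]
    (α : K) (hroot : aeval α P = 0) (hgen : Algebra.adjoin ℚ {α} = ⊤) :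
    p ∣ Nat.card (↥(Subalgebra.toSubmodule (integralClosure ℤ K)) ⧸
        Submodule.comap (Subalgebra.toSubmodule (integralClosure ℤ K)).subtype
          (Subalgebra.toSubmodule (Algebra.adjoin ℤ {α}))) ∧
      Algebra.adjoin ℤ {α} ≠ integralClosure ℤ K := by
  haveI : Fact p.Prime := ⟨hp⟩
  have hp0 : (p : ℤ) ≠ 0 := Int.natCast_ne_zero.mpr hp.ne_zero
  have hpnd1 : ¬ ((p:ℤ) ∣ 1) := by
    intro h
    have := Int.eq_one_of_dvd_one (by positivity) h
    exact hp.ne_one (by exact_mod_cast this)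
  have h1a : (1 : ℤ) + a ≠ 0 := by
    intro h
    exact hpnd1 (by have : a = -1 := by linarith
                    rw [this] at hpa; exact (dvd_neg).mp hpa)
  -- coeff of P at n
  have hcoeffn : P.coeff n ≠ 0 := by
    rw [hP]
    simp only [coeff_add, coeff_X_pow, coeff_C_mul, coeff_C,
      if_pos rfl, if_neg (by omega : ¬ n = 0), add_zero]
    by_cases hnm : n = m
    · rw [if_pos hnm, mul_one]; intro h; norm_num at h; exact h1a (by linarith)
    · rw [if_neg hnm, mul_zero, add_zero]; norm_num
  have hndeg : P.natDegree = n := by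
    have hle : P.natDegree ≤ n := by
      rw [hP]
      compute_degree
      all_goals simp only [sup_le_iff] <;> omega
    have hge := le_natDegree_of_ne_zero hcoeffn
    omega
  have hb0 : b ≠ 0 := by
    intro hb
    have h1 : (X:ℤ[X]) ^ n = X * X ^ (n-1) := by
      conv_lhs => rw [show n = (n-1)+1 by omega]
      rw [pow_succ']
    have h2 : (X:ℤ[X]) ^ m = X * X ^ (m-1) := by
      conv_lhs => rw [show m = (m-1)+1 by omega]
      rw [pow_succ']
    have hfac : P = X * (X ^ (n-1) + C a * X ^ (m-1)) := by
      rw [hP, hb, C_0, add_zero, h1, h2]; ring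
    rcases hPirr.isUnit_or_isUnit hfac with h | h
    · exact Polynomial.not_isUnit_X h
    · have hd := natDegree_eq_zero_of_isUnit h
      have hc : ((X:ℤ[X]) ^ (n-1) + C a * X ^ (m-1)).coeff (n-1) ≠ 0 := by
        simp only [coeff_add, coeff_X_pow, coeff_C_mul, if_pos rfl]
        by_cases hnm : n = m
        · rw [if_pos (by omega : n - 1 = m - 1), mul_one]
          intro h; norm_num at h; exact h1a (by linarith)
        · rw [if_neg (by omega : ¬ n - 1 = m - 1), mul_zero, add_zero]
          norm_num
      have := le_natDegree_of_ne_zero hc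
      omega
  have hrK : α ^ n + (a:K) * α ^ m + (b:K) = 0 := by
    have := hroot
    rw [hP] at this
    simpa using this
  have hα0 : α ≠ 0 := by
    intro h0
    rw [h0, zero_pow (by omega : n ≠ 0), zero_pow (by omega : m ≠ 0)] at hrK
    simp only [mul_zero, add_zero, zero_add] at hrK
    exact hb0 (by exact_mod_cast hrK)
  -- integers
  obtain ⟨a', ha'⟩ := hpa
  obtain ⟨b'', hb''⟩ := id hpb
  set c : ℤ := -((p:ℤ) * b'') with hc
  have hpc : (p:ℤ) * c = -b := by rw [hc, hb'']; ring
  set β : K := (p:K)⁻¹ * (α ^ (n-1) + (a:K) * α ^ (m-1)) with hβ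
  have hpK : (p:K) ≠ 0 := Nat.cast_ne_zero.mpr hp.ne_zero
  have hpβ : (p:K) * β = α ^ (n-1) + (a:K) * α ^ (m-1) := by
    rw [hβ, ← mul_assoc, mul_inv_cancel₀ hpK, one_mul]
  have hpowa : α * α ^ (n-1) = α ^ n := by
    rw [← pow_succ']; congr 1; omega
  have hpowm : α * α ^ (m-1) = α ^ m := by
    rw [← pow_succ']; congr 1; omega
  have hαβ : α * β = (c:K) := by
    have key : (p:K) * (α * β) = (p:K) * (c:K) := by
      have e1 : (p:K) * (α * β) = α * ((p:K) * β) := by ring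
      rw [e1, hpβ]
      have e2 : α * (α ^ (n-1) + (a:K) * α ^ (m-1)) = α ^ n + (a:K) * α ^ m := by
        rw [mul_add, hpowa, mul_left_comm, hpowm]
      rw [e2]
      have : ((p:ℤ) * c : ℤ) = (-b : ℤ) := hpc
      have e3 : (p:K) * (c:K) = -(b:K) := by exact_mod_cast congrArg (fun z : ℤ => (z : K)) this
      rw [e3]
      linear_combination hrK
    exact mul_left_cancel₀ hpK key
  -- integrality of β
  set e₁ : ℤ := -(a' * c ^ (m-1)) with he₁
  set e₀ : ℤ := c ^ (n-2) * b'' with he₀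
  have h1 : c ^ n = e₀ * b := by
    conv_lhs => rw [show n = (n-2)+2 by omega]
    rw [pow_add, he₀, hb'', hc]; ring
  have h2 : e₁ * c ^ (n-m) = e₀ * a := by
    have hcc : c ^ (m-1) * c ^ (n-m) = c ^ (n-2) * c := by
      rw [← pow_add, ← pow_succ]; congr 1; omega
    rw [he₁, he₀, ha']
    calc -(a' * c ^ (m-1)) * c ^ (n-m) = -(a' * (c ^ (m-1) * c ^ (n-m))) := by ring
    _ = -(a' * (c ^ (n-2) * c)) := by rw [hcc]
    _ = c ^ (n-2) * b'' * ((p:ℤ) * a') := by rw [hc]; ring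
  have hQroot : β ^ n + (e₁ : K) * β ^ (n-m) + (e₀ : K) = 0 := by
    have hbn : β ^ n * α ^ n = (c:K) ^ n := by rw [← mul_pow, mul_comm β α, hαβ]
    have hbk : β ^ (n-m) * α ^ (n-m) = (c:K) ^ (n-m) := by
      rw [← mul_pow, mul_comm β α, hαβ]
    have hsplit : α ^ n = α ^ (n-m) * α ^ m := by rw [← pow_add]; congr 1; omega
    have h1K : (c:K) ^ n = (e₀:K) * (b:K) := by exact_mod_cast congrArg (fun z : ℤ => (z:K)) h1
    have h2K : (e₁:K) * (c:K) ^ (n-m) = (e₀:K) * (a:K) := by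
      exact_mod_cast congrArg (fun z : ℤ => (z:K)) h2
    have key : (β ^ n + (e₁ : K) * β ^ (n-m) + (e₀ : K)) * α ^ n = 0 := by
      linear_combination hbn + (e₁:K) * α ^ m * hbk + (e₁:K) * β ^ (n-m) * hsplit
        + α ^ m * h2K + h1K + (e₀:K) * hrK
    exact (mul_eq_zero.mp key).resolve_right (pow_ne_zero n hα0)
  have hβint : IsIntegral ℤ β := by
    refine ⟨X ^ n + C e₁ * X ^ (n-m) + C e₀, ?_, ?_⟩
    · rw [add_assoc]
      apply (monic_X_pow n).add_of_left
      refine lt_of_le_of_lt (degree_add_le _ _) (max_lt ?_ ?_)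
      · refine lt_of_le_of_lt (degree_mul_le _ _) ?_
        refine lt_of_le_of_lt (add_le_add degree_C_le (degree_X_pow _).le) ?_
        rw [degree_X_pow, zero_add]
        exact_mod_cast (by omega : n - m < n)
      · refine lt_of_le_of_lt degree_C_le ?_
        rw [degree_X_pow]
        exact_mod_cast (by omega : 0 < n)
    · rw [← aeval_def]
      simpa using hQroot
  -- β is not in ℤ[α]
  have hβnot : β ∉ Algebra.adjoin ℤ {α} := by
    intro hmem
    rw [Algebra.adjoin_singleton_eq_range_aeval] at hmem
    obtain ⟨g, hg⟩ := hmem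
    set R : ℤ[X] := X ^ (n-1) + C a * X ^ (m-1) with hR
    set D : ℤ[X] := C (p:ℤ) * g - R with hD
    have hg' : aeval α g = β := hg
    have hDroot : aeval α D = 0 := by
      rw [hD, map_sub, map_mul, aeval_C, hg', hR, map_add, map_mul, aeval_C, map_pow,
        map_pow, aeval_X]
      have e1 : algebraMap ℤ K (p:ℤ) = (p:K) := by push_cast; rfl
      have e2 : algebraMap ℤ K a = (a:K) := by push_cast; rfl
      rw [e1, e2, hpβ]
      ring
    have hD0 : D ≠ 0 := by
      intro h
      have h' : C (p:ℤ) * g = R := by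
        have := sub_eq_zero.mp (hD ▸ h)
        exact this
      have hco := congrArg (fun q : ℤ[X] => q.coeff (n-1)) h'
      simp only [hR, coeff_C_mul, coeff_add, coeff_X_pow, if_pos rfl] at hco
      by_cases hnm : n = m
      · rw [if_pos (by omega : n - 1 = m - 1), mul_one] at hco
        norm_num at hco
        exact hpnd1 ⟨g.coeff (n-1) - a', by rw [mul_sub, hco, ha']; ring⟩
      · rw [if_neg (by omega : ¬ n - 1 = m - 1), mul_zero, add_zero] at hco
        norm_num at hco
        exact hpnd1 ⟨g.coeff (n-1), hco.symm⟩
    -- primitivity of P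
    have hPprim : P.IsPrimitive := by
      intro r hr
      obtain ⟨Q, hQ⟩ := hr
      rcases hPirr.isUnit_or_isUnit hQ with h | h
      · exact isUnit_C.mp h
      · exfalso
        have h1 := natDegree_eq_zero_of_isUnit h
        have h2 : P.natDegree ≤ (C r).natDegree + Q.natDegree := hQ ▸ natDegree_mul_le
        rw [natDegree_C, h1] at h2
        omega
    have hαint : IsIntegral ℚ α := IsIntegral.of_finite ℚ α
    have hPm_irr : Irreducible (P.map (Int.castRingHom ℚ)) :=
      (IsPrimitive.Int.irreducible_iff_irreducible_map_cast hPprim).mp hPirr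
    have hcast : (Int.castRingHom ℚ) = algebraMap ℤ ℚ := rfl
    have hProotQ : aeval α (P.map (Int.castRingHom ℚ)) = 0 := by
      rw [hcast, aeval_map_algebraMap]; exact hroot
    have hassoc : Associated (minpoly ℚ α) (P.map (Int.castRingHom ℚ)) :=
      (minpoly.irreducible hαint).associated_of_dvd hPm_irr (minpoly.dvd ℚ α hProotQ)
    have hPdvdDQ : P.map (Int.castRingHom ℚ) ∣ D.map (Int.castRingHom ℚ) := by
      refine hassoc.symm.dvd.trans (minpoly.dvd ℚ α ?_)
      rw [hcast, aeval_map_algebraMap]; exact hDroot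
    have hPdvdD : P ∣ D := by
      have hmul := D.eq_C_content_mul_primPart
      have hprime : Prime (P.map (Int.castRingHom ℚ)) := hPm_irr.prime
      have hdvd2 : P.map (Int.castRingHom ℚ) ∣
          (C D.content).map (Int.castRingHom ℚ) * (D.primPart.map (Int.castRingHom ℚ)) := by
        rw [← Polynomial.map_mul, ← hmul]
        exact hPdvdDQ
      rcases hprime.2.2 _ _ hdvd2 with hl | hr
      · exfalso
        have hcont0 : ((D.content : ℚ)) ≠ 0 := by
          simp only [ne_eq, Int.cast_eq_zero, content_eq_zero_iff]
          exact hD0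
        have hdegle := degree_le_of_dvd hl
          (by simpa [map_C, C_eq_zero, Int.coe_castRingHom] using hcont0)
        have hdegP : P.degree = (n : ℕ) := by
          rw [degree_eq_natDegree hPirr.ne_zero, hndeg]
        have hfin : ((n:ℕ) : WithBot ℕ) ≤ 0 := by
          rw [← hdegP,
            ← degree_map_eq_of_injective (f := Int.castRingHom ℚ) Int.cast_injective]
          refine hdegle.trans ?_
          rw [map_C]
          exact degree_C_le
        norm_cast at hfin
        omega
      · exact (hPprim.dvd_of_fraction_map_dvd_fraction_map
          hr).trans D.primPart_dvd
    -- reduce mod p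
    have hmodp := Polynomial.map_dvd (Int.castRingHom (ZMod p)) hPdvdD
    have ha0 : ((a:ℤ) : ZMod p) = 0 := (ZMod.intCast_zmod_eq_zero_iff_dvd a p).mpr ⟨a', ha'⟩
    have hb0' : ((b:ℤ) : ZMod p) = 0 := (ZMod.intCast_zmod_eq_zero_iff_dvd b p).mpr
      ((dvd_pow_self (p:ℤ) two_ne_zero).trans hpb)
    have hp0' : (((p:ℤ)) : ZMod p) = 0 := by
      rw [Int.cast_natCast, ZMod.natCast_self]
    have haP : ((a:ℤ) : (ZMod p)[X]) = 0 := by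
      rw [← map_intCast (Polynomial.C : (ZMod p) →+* (ZMod p)[X]) a, ha0, map_zero]
    have hbP : ((b:ℤ) : (ZMod p)[X]) = 0 := by
      rw [← map_intCast (Polynomial.C : (ZMod p) →+* (ZMod p)[X]) b, hb0', map_zero]
    have hpP : ((p:ℕ) : (ZMod p)[X]) = 0 := by
      rw [← map_natCast (Polynomial.C : (ZMod p) →+* (ZMod p)[X]) p, ZMod.natCast_self,
        map_zero]
    have hPmodp : P.map (Int.castRingHom (ZMod p)) = X ^ n := by
      rw [hP]
      simp [Polynomial.map_add, Polynomial.map_mul, Polynomial.map_pow, map_C, map_X,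
        ha0, hb0', haP, hbP]
    have hDmodp : D.map (Int.castRingHom (ZMod p)) = -(X ^ (n-1)) := by
      rw [hD, hR]
      simp [Polynomial.map_sub, Polynomial.map_add, Polynomial.map_mul, Polynomial.map_pow,
        map_C, map_X, ha0, hp0', haP, hpP]
    rw [hPmodp, hDmodp, dvd_neg] at hmodp
    have hle := natDegree_le_of_dvd hmodp (pow_ne_zero _ X_ne_zero)
    rw [natDegree_X_pow, natDegree_X_pow] at hle
    omega
  -- assembly
  have hβmem : β ∈ integralClosure ℤ K := (mem_integralClosure_iff ℤ K).mpr hβint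
  set x : ↥(Subalgebra.toSubmodule (integralClosure ℤ K)) := ⟨β, hβmem⟩ with hx
  set M := Submodule.comap (Subalgebra.toSubmodule (integralClosure ℤ K)).subtype
    (Subalgebra.toSubmodule (Algebra.adjoin ℤ {α})) with hM
  have hne : Algebra.adjoin ℤ {α} ≠ integralClosure ℤ K := by
    intro heq
    rw [heq] at hβnot
    exact hβnot hβmem
  refine ⟨?_, hne⟩
  set xq := (Submodule.Quotient.mk x : _ ⧸ M) with hxq
  have hx0 : xq ≠ 0 := by
    rw [hxq, Ne, Submodule.Quotient.mk_eq_zero, hM, Submodule.mem_comap]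
    exact hβnot
  have hps : p • xq = 0 := by
    rw [hxq, ← Submodule.Quotient.mk_smul, Submodule.Quotient.mk_eq_zero, hM,
      Submodule.mem_comap]
    show ((p • x : ↥(Subalgebra.toSubmodule (integralClosure ℤ K))) : K) ∈
      Subalgebra.toSubmodule (Algebra.adjoin ℤ {α})
    have hcoe : ((p • x : ↥(Subalgebra.toSubmodule (integralClosure ℤ K))) : K) = (p:K) * β := by
      rw [hx]
      push_cast
      rw [nsmul_eq_mul]
    rw [hcoe, hpβ]
    refine Subalgebra.add_mem _ ?_ ?_
    · exact pow_mem (Algebra.self_mem_adjoin_singleton ℤ α) _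
    · refine Subalgebra.mul_mem _ ?_ (pow_mem (Algebra.self_mem_adjoin_singleton ℤ α) _)
      have : (a:K) = algebraMap ℤ K a := by push_cast; rfl
      rw [this]
      exact Subalgebra.algebraMap_mem _ a
  have hdvd : addOrderOf xq ∣ p := addOrderOf_dvd_of_nsmul_eq_zero hps
  have hord : addOrderOf xq = p := by
    rcases (Nat.Prime.eq_one_or_self_of_dvd hp _ hdvd) with h | h
    · exact absurd (AddMonoid.addOrderOf_eq_one_iff.mp h) hx0
    · exact h
  rw [← hord]
  exact addOrderOf_dvd_natCard xq
end

section
/- Let P(X) = X³ + √3·X² + 3 ∈ ℤ[√3][X] and 𝔭 = √3·ℤ[√3]. Then P is irreducible over ℤ[√3], and for any root α of P, the index ideal Ind_{ℤ[√3]}(P) = [O_L : ℤ[√3][α]] satisfies ν_𝔭(Ind(P)) ≥ 1; hence α does not generate a power integral basis of the integral closure O_L of ℤ[√3] in its quotient field extension generated by α. -/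
/-!
Write `π = √3`, so that `P = X³ + π X² + π²`; it is not Eisenstein at `π`. A root `a / b` in the
fraction field gives `a³ + π a² b + π² b³ = 0`, which forces `π ∣ a`, then `π ∣ b`, and
`(a / π, b / π)` is again a solution; so `π ^ n ∣ b` for all `n`, and `b = 0` because `π` has
finite multiplicity (the norm of `π` is `-3`). Hence the cubic `P` has no root in `K`, it is
irreducible over `K` and over `ℤ[√3]`, and `1, α, α²` are linearly independent.

On the other hand `β = α² / π` is integral, being a root of `X³ - π X² - 2π X - π`, while
`c β ∈ ℤ[√3][α] = ℤ[√3] ⊕ ℤ[√3] α ⊕ ℤ[√3] α²` forces `π ∣ c`. So the class of `β` in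
`O_L / ℤ[√3][α]` survives localization at `𝔭`, and `β ∉ ℤ[√3][α]`.
-/

open Polynomial

section CubicDescent

variable {R : Type*} [CommRing R]

noncomputable def piCubic (π : R) : R[X] := X ^ 3 + C π * X ^ 2 + C (π ^ 2)

theorem piCubic_monic (π : R) : (piCubic π).Monic := by
  unfold piCubic; monicity!

theorem natDegree_piCubic [Nontrivial R] (π : R) : (piCubic π).natDegree = 3 := by
  unfold piCubic; compute_degree!

theorem aeval_piCubic {A : Type*} [CommRing A] [Algebra R A] (π : R) (x : A) :
    aeval x (piCubic π) = x ^ 3 + algebraMap R A π * x ^ 2 + algebraMap R A π ^ 2 := by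
  simp [piCubic]

theorem isIntegral_of_algebraMap_mul_eq_sq {A : Type*} [CommRing A] [IsDomain A] [Algebra R A]
    {π : R} {α β : A} (hπA : algebraMap R A π ≠ 0) (hα : aeval α (piCubic π) = 0)
    (hβ : algebraMap R A π * β = α ^ 2) : IsIntegral R β := by
  set p := algebraMap R A π
  rw [aeval_piCubic] at hα
  -- `p³ (β³ - p β² - 2p β - p) = α⁶ - (p α² + p²)² = (α³ - p α² - p²) (α³ + p α² + p²)`
  have hβ3 : p ^ 3 * (β ^ 3 - p * β ^ 2 - 2 * p * β - p) = 0 := by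
    linear_combination (α ^ 3 - p * α ^ 2 - p ^ 2) * hα +
      (p ^ 2 * β ^ 2 + p * β * α ^ 2 + α ^ 4 - p ^ 2 * (p * β + α ^ 2) - 2 * p ^ 3) * hβ
  refine ⟨X ^ 3 - C π * X ^ 2 - C (2 * π) * X - C π, by monicity!, ?_⟩
  rw [← aeval_def]
  simp only [map_sub, map_mul, map_pow, aeval_X, aeval_C, map_ofNat]
  exact (mul_eq_zero.mp hβ3).resolve_left (pow_ne_zero 3 hπA)

variable [IsDomain R] {π : R}

theorem Prime.exists_eq_mul_of_cubic (hπ : Prime π) {a b : R}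
    (h : a ^ 3 + π * a ^ 2 * b + π ^ 2 * b ^ 3 = 0) :
    ∃ a' b', a = π * a' ∧ b = π * b' ∧ a' ^ 3 + π * a' ^ 2 * b' + π ^ 2 * b' ^ 3 = 0 := by
  obtain ⟨a', rfl⟩ : π ∣ a :=
    hπ.dvd_of_dvd_pow (n := 3) ⟨-(a ^ 2 * b + π * b ^ 3), by linear_combination h⟩
  have hb : π ^ 2 * (π * a' ^ 3 + π * a' ^ 2 * b + b ^ 3) = 0 := by linear_combination h
  replace hb := (mul_eq_zero.mp hb).resolve_left (pow_ne_zero 2 hπ.ne_zero)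
  obtain ⟨b', rfl⟩ : π ∣ b :=
    hπ.dvd_of_dvd_pow (n := 3) ⟨-(a' ^ 3 + a' ^ 2 * b), by linear_combination hb⟩
  have h' : π * (a' ^ 3 + π * a' ^ 2 * b' + π ^ 2 * b' ^ 3) = 0 := by linear_combination hb
  exact ⟨a', b', rfl, rfl, (mul_eq_zero.mp h').resolve_left hπ.ne_zero⟩

theorem Prime.pow_dvd_of_cubic (hπ : Prime π) (n : ℕ) {a b : R}
    (h : a ^ 3 + π * a ^ 2 * b + π ^ 2 * b ^ 3 = 0) : π ^ n ∣ b := by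
  induction n generalizing a b with
  | zero => simp
  | succ n ih =>
    obtain ⟨a', b', -, rfl, h'⟩ := hπ.exists_eq_mul_of_cubic h
    rw [pow_succ']
    exact mul_dvd_mul_left π (ih h')

theorem Prime.eq_zero_of_cubic (hπ : Prime π) (hfin : ∀ b ≠ 0, FiniteMultiplicity π b)
    {a b : R} (h : a ^ 3 + π * a ^ 2 * b + π ^ 2 * b ^ 3 = 0) : b = 0 := by
  by_contra hb
  exact FiniteMultiplicity.not_iff_forall.mpr (hπ.pow_dvd_of_cubic · h) (hfin b hb)

variable (K : Type*) [Field K] [Algebra R K] [IsFractionRing R K]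

theorem Prime.aeval_piCubic_ne_zero (hπ : Prime π) (hfin : ∀ b ≠ 0, FiniteMultiplicity π b)
    (x : K) : aeval x (piCubic π) ≠ 0 := by
  obtain ⟨a, b, hb, rfl⟩ := IsFractionRing.div_surjective (A := R) x
  have hb0 : algebraMap R K b ≠ 0 := IsFractionRing.to_map_ne_zero_of_mem_nonZeroDivisors hb
  rw [aeval_piCubic]
  intro h
  refine nonZeroDivisors.ne_zero hb (hπ.eq_zero_of_cubic hfin (a := a) ?_)
  apply IsFractionRing.injective R K
  field_simp at h
  simp only [map_add, map_mul, map_pow, map_zero]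
  linear_combination h

theorem Prime.irreducible_map_piCubic (hπ : Prime π) (hfin : ∀ b ≠ 0, FiniteMultiplicity π b) :
    Irreducible ((piCubic π).map (algebraMap R K)) := by
  refine irreducible_of_degree_le_three_of_not_isRoot ?_ fun x hx ↦
    hπ.aeval_piCubic_ne_zero K hfin x ?_
  · simp [(piCubic_monic π).natDegree_map, natDegree_piCubic]
  · rwa [IsRoot, eval_map_algebraMap] at hx

theorem Prime.irreducible_piCubic (hπ : Prime π) (hfin : ∀ b ≠ 0, FiniteMultiplicity π b) :
    Irreducible (piCubic π) :=
  (piCubic_monic π).irreducible_of_irreducible_map _ _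
    (hπ.irreducible_map_piCubic (FractionRing R) hfin)

variable {L : Type*} [Field L] [Algebra R L] [FaithfulSMul R L] {α : L}

theorem Prime.eq_zero_of_natDegree_le_two_of_aeval_piCubic (hπ : Prime π)
    (hfin : ∀ b ≠ 0, FiniteMultiplicity π b) (hα : aeval α (piCubic π) = 0) {Q : R[X]}
    (hQ : Q.natDegree ≤ 2) (hQα : aeval α Q = 0) : Q = 0 := by
  by_contra hQ0
  let _ := FractionRing.liftAlgebra R L
  let K := FractionRing R
  have hmin : (piCubic π).map (algebraMap R K) = minpoly K α :=
    minpoly.eq_of_irreducible_of_monic (hπ.irreducible_map_piCubic K hfin)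
      (by rwa [aeval_map_algebraMap]) ((piCubic_monic π).map _)
  have hdeg := natDegree_le_natDegree <| minpoly.degree_le_of_ne_zero K α
    ((Polynomial.map_ne_zero_iff (IsFractionRing.injective R K)).mpr hQ0)
    (by rwa [aeval_map_algebraMap])
  rw [← hmin, (piCubic_monic π).natDegree_map, natDegree_piCubic] at hdeg
  have hmap := natDegree_map_le (f := algebraMap R K) (p := Q)
  omega

theorem Prime.dvd_of_algebraMap_mul_mem_adjoin (hπ : Prime π)
    (hfin : ∀ b ≠ 0, FiniteMultiplicity π b) (hα : aeval α (piCubic π) = 0) {β : L}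
    (hβ : algebraMap R L π * β = α ^ 2) {c : R}
    (hc : algebraMap R L c * β ∈ Algebra.adjoin R {α}) : π ∣ c := by
  obtain ⟨q, hq⟩ := (Algebra.adjoin_singleton_eq_range_aeval R α).le hc
  set r := q %ₘ piCubic π
  have hr : r.natDegree ≤ 2 := by
    have := natDegree_modByMonic_lt q (piCubic_monic π)
      (fun h ↦ by simpa [h] using natDegree_piCubic π)
    rw [natDegree_piCubic] at this
    exact Nat.le_of_lt_succ this
  have hrα : aeval α r = algebraMap R L c * β := by
    rw [aeval_modByMonic_eq_self_of_root hα]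
    exact hq
  have hQ : C π * r - C c * X ^ 2 = 0 := by
    refine hπ.eq_zero_of_natDegree_le_two_of_aeval_piCubic hfin hα ?_ ?_
    · refine (natDegree_sub_le _ _).trans (max_le ?_ ?_)
      · exact (natDegree_C_mul_le _ _).trans hr
      · exact (natDegree_C_mul_le _ _).trans (natDegree_X_pow_le 2)
    · simp only [map_sub, map_mul, aeval_C, map_pow, aeval_X, hrα]
      linear_combination algebraMap R L c * hβ
  have hcoeff := congrArg (coeff · 2) hQ
  simp only [coeff_sub, coeff_C_mul, coeff_X_pow, if_pos, coeff_zero, mul_one] at hcoeff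
  exact ⟨r.coeff 2, by linear_combination -hcoeff⟩

end CubicDescent

theorem one_le_moduleLength_iff {R M : Type*} [Ring R] [AddCommGroup M] [Module R M] :
    1 ≤ moduleLength R M ↔ Nontrivial M := by
  rw [moduleLength, ← Module.coe_length, WithBot.unbotD_coe, Order.one_le_iff_pos,
    Module.length_pos_iff]

theorem LocalizedModule.nontrivial_of_smul_ne_zero {R M : Type*} [CommSemiring R]
    [AddCommMonoid M] [Module R M] {S : Submonoid R} {m : M} (h : ∀ s ∈ S, s • m ≠ 0) :
    Nontrivial (LocalizedModule S M) := by
  refine ⟨LocalizedModule.mkLinearMap S M m, 0, fun h0 ↦ ?_⟩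
  obtain ⟨s, hs⟩ := (IsLocalizedModule.eq_zero_iff S (LocalizedModule.mkLinearMap S M)).mp h0
  exact h s s.2 hs

namespace Zsqrtd

instance : Nonsquare 3 :=
  ⟨fun n h ↦ by
    have : n ≤ 2 := by nlinarith
    interval_cases n <;> omega⟩

-- Mathlib's instance is stated for `ℤ√(d : ℕ)`, which does not unify with `ℤ√3`.
instance : IsDomain (ℤ√3) := inferInstanceAs (IsDomain (ℤ√((3 : ℕ) : ℤ)))

theorem finiteMultiplicity_sqrtd {d : ℤ} [IsDomain (ℤ√d)] (hd : d.natAbs ≠ 1) {b : ℤ√d}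
    (hb : b ≠ 0) : FiniteMultiplicity sqrtd b := by
  have hN : FiniteMultiplicity (sqrtd (d := d)).norm b.norm := by
    refine Int.finiteMultiplicity_iff.mpr ⟨by simpa [norm_def] using hd, fun h0 ↦ hb ?_⟩
    have : (b.norm : ℤ√d) = b * star b := norm_eq_mul_conj b
    rw [h0, Int.cast_zero, eq_comm, mul_eq_zero, star_eq_zero, or_self] at this
    exact this
  rw [finiteMultiplicity_iff_emultiplicity_ne_top] at hN ⊢
  exact ne_top_of_le_ne_top hN (le_emultiplicity_map (normMonoidHom (d := d)))

end Zsqrtd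

theorem stmt12_general (𝔭 : Ideal (Zsqrtd 3)) (h𝔭 : 𝔭 = Ideal.span {Zsqrtd.sqrtd}) [𝔭.IsPrime]
    (K L : Type*) [Field K] [Field L] [Algebra (Zsqrtd 3) K] [IsFractionRing (Zsqrtd 3) K]
    [Algebra K L] [Algebra (Zsqrtd 3) L] [IsScalarTower (Zsqrtd 3) K L]
    (P : (Zsqrtd 3)[X]) (hP : P = X ^ 3 + C Zsqrtd.sqrtd * X ^ 2 + C 3)
    (α : L) (hroot : aeval α P = 0) :
    Irreducible P ∧
      (1 : ℕ∞) ≤ moduleLength (Localization.AtPrime 𝔭)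
        (LocalizedModule 𝔭.primeCompl
          (↥(Subalgebra.toSubmodule (integralClosure (Zsqrtd 3) L)) ⧸
            Submodule.comap (Subalgebra.toSubmodule (integralClosure (Zsqrtd 3) L)).subtype
              (Subalgebra.toSubmodule (Algebra.adjoin (Zsqrtd 3) {α})))) ∧
      Algebra.adjoin (Zsqrtd 3) {α} ≠ integralClosure (Zsqrtd 3) L := by
  subst h𝔭
  set π : ℤ√3 := Zsqrtd.sqrtd
  have hπ0 : π ≠ 0 := fun h ↦ by simpa [π] using congrArg Zsqrtd.im h
  have hπ : Prime π := (Ideal.span_singleton_prime hπ0).mp ‹_›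
  have hfin : ∀ b ≠ 0, FiniteMultiplicity π b :=
    fun _ ↦ Zsqrtd.finiteMultiplicity_sqrtd (by decide)
  have hπ3 : π ^ 2 = 3 := by
    rw [sq]
    exact_mod_cast Zsqrtd.dmuld
  rw [← hπ3] at hP
  subst hP
  have := FaithfulSMul.trans (ℤ√3) K L
  have hπL : algebraMap (ℤ√3) L π ≠ 0 :=
    (map_ne_zero_iff _ (FaithfulSMul.algebraMap_injective _ _)).mpr hπ0
  set β := (algebraMap (ℤ√3) L π)⁻¹ * α ^ 2
  have hβ : algebraMap (ℤ√3) L π * β = α ^ 2 := mul_inv_cancel_left₀ hπL _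
  have hβint : IsIntegral (ℤ√3) β := isIntegral_of_algebraMap_mul_eq_sq hπL hroot hβ
  refine ⟨hπ.irreducible_piCubic hfin, ?_, fun heq ↦ ?_⟩
  · refine one_le_moduleLength_iff.mpr <| LocalizedModule.nontrivial_of_smul_ne_zero
      (m := Submodule.Quotient.mk ⟨β, hβint⟩) fun s hs h0 ↦ Ideal.mem_primeCompl_iff.mp hs ?_
    rw [← Submodule.Quotient.mk_smul, Submodule.Quotient.mk_eq_zero, Submodule.mem_comap] at h0
    exact Ideal.mem_span_singleton.mpr <|
      hπ.dvd_of_algebraMap_mul_mem_adjoin hfin hroot hβ (by simpa [Algebra.smul_def] using h0)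
  · refine hπ.not_isUnit <| isUnit_of_dvd_one <|
      hπ.dvd_of_algebraMap_mul_mem_adjoin hfin hroot hβ (c := 1) ?_
    rw [map_one, one_mul, heq]
    exact hβint

/-- **Concrete example.** Let `P = X³ + √3·X² + 3 ∈ ℤ[√3][X]` and
`𝔭 = √3·ℤ[√3]`.  Then `P` is irreducible over `ℤ[√3]` and for any root `α` of `P`
(generating `L = K(α)` over the quotient field `K` of `ℤ[√3]`), the index ideal
`Ind(P) = [O_L : ℤ[√3][α]]` satisfies `ν_𝔭(Ind(P)) ≥ 1`; hence `α` does not generate a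
power integral basis of the integral closure `O_L` of `ℤ[√3]` in `L`. -/
theorem stmt12 (𝔭 : Ideal (Zsqrtd 3)) (h𝔭 : 𝔭 = Ideal.span {Zsqrtd.sqrtd}) [𝔭.IsPrime]
    (K L : Type*) [Field K] [Field L] [Algebra (Zsqrtd 3) K] [IsFractionRing (Zsqrtd 3) K]
    [Algebra K L] [Algebra (Zsqrtd 3) L] [IsScalarTower (Zsqrtd 3) K L]
    [FiniteDimensional K L] [Algebra.IsSeparable K L]
    (P : (Zsqrtd 3)[X]) (hP : P = X ^ 3 + C Zsqrtd.sqrtd * X ^ 2 + C 3)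
    (α : L) (hroot : aeval α P = 0) (hgen : Algebra.adjoin K {α} = ⊤) :
    Irreducible P ∧
      (1 : ℕ∞) ≤ moduleLength (Localization.AtPrime 𝔭)
        (LocalizedModule 𝔭.primeCompl
          (↥(Subalgebra.toSubmodule (integralClosure (Zsqrtd 3) L)) ⧸
            Submodule.comap (Subalgebra.toSubmodule (integralClosure (Zsqrtd 3) L)).subtype
              (Subalgebra.toSubmodule (Algebra.adjoin (Zsqrtd 3) {α})))) ∧
      Algebra.adjoin (Zsqrtd 3) {α} ≠ integralClosure (Zsqrtd 3) L :=
  stmt12_general 𝔭 h𝔭 K L P hP α hroot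
end

section
/- Let R be a DVR with maximal ideal 𝔭 = πR and residue field k, let α be integral over R with monic minimal polynomial P of degree n, A = R[α], and let W ∈ R[X] be monic of degree m with W̄ | P̄ in k[X]. Set M = A + (W(α)/π)A. Then A/πM is isomorphic as an R-module to k[X]/(W̄), which is isomorphic to k^m. -/
/-!
Since `π` is invertible in `L`, `πM = πA + W(α)A`, which inside `A` is the ideal `(π, W(α))`.
As `R` is integrally closed, `A ≅ R[X]/(P)`, so `A/πM ≅ R[X]/(P, π, W) = R[X]/(π, W)`, the last
step because `W̄ ∣ P̄` puts `P` in `(π, W)`. Finally `R[X]/(π, W) ≅ k[X]/(W̄)`, and `W̄` is monic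
of degree `m`, so `1, X, …, X^(m-1)` is a `k`-basis of `k[X]/(W̄)`.
-/

open Polynomial

theorem Submodule.map_mulLeft_sup_map_mulLeft_mul_inv {R L : Type*} [CommRing R] [Field L]
    [Algebra R L] (A : Submodule R L) {c : L} (hc : c ≠ 0) (w : L) :
    (A ⊔ A.map (LinearMap.mulLeft R (w * c⁻¹))).map (LinearMap.mulLeft R c) =
      A.map (LinearMap.mulLeft R c) ⊔ A.map (LinearMap.mulLeft R w) := by
  rw [Submodule.map_sup, ← Submodule.map_comp, ← LinearMap.mulLeft_mul, mul_left_comm,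
    mul_inv_cancel₀ hc, mul_one]

theorem Subalgebra.map_comap_subtype_mulLeft_sup {R S : Type*} [CommRing R] [CommRing S]
    [Algebra R S] (A : Subalgebra R S) {a b : S} (ha : a ∈ A) (hb : b ∈ A) :
    ((A.toSubmodule.map (LinearMap.mulLeft R a) ⊔ A.toSubmodule.map (LinearMap.mulLeft R b)).comap
        A.toSubmodule.subtype).map (A.toSubmoduleEquiv : A.toSubmodule →ₗ[R] A) =
      (Ideal.span {⟨a, ha⟩, ⟨b, hb⟩} : Ideal A).restrictScalars R := by
  ext ⟨y, hy⟩
  rw [Submodule.mem_map_equiv, Submodule.mem_comap, Submodule.restrictScalars_mem,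
    Ideal.mem_span_pair, Submodule.mem_sup]
  change (∃ z ∈ _, ∃ z' ∈ _, z + z' = y) ↔ _
  constructor
  · rintro ⟨_, ⟨u, hu, rfl⟩, _, ⟨v, hv, rfl⟩, h⟩
    exact ⟨⟨u, hu⟩, ⟨v, hv⟩, Subtype.ext (by simp [← h, mul_comm])⟩
  · rintro ⟨⟨u, hu⟩, ⟨v, hv⟩, h⟩
    refine ⟨_, ⟨u, hu, rfl⟩, _, ⟨v, hv, rfl⟩, ?_⟩
    simpa [mul_comm] using congrArg Subtype.val h

noncomputable def Ideal.quotientEquivQuotientMap {R A B : Type*} [CommRing R] [CommRing A]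
    [CommRing B] [Algebra R A] [Algebra R B] {f : A →ₐ[R] B} (hf : Function.Surjective f)
    {J : Ideal A} (hJ : RingHom.ker f ≤ J) : (A ⧸ J) ≃ₐ[R] B ⧸ J.map f :=
  (Ideal.quotientEquivAlgOfEq R <| by
      change J = RingHom.ker ((Ideal.Quotient.mk (J.map (f : A →+* B))).comp (f : A →+* B))
      rw [← RingHom.comap_ker, Ideal.mk_ker, Ideal.comap_map_of_surjective' (f : A →+* B) hf]
      exact (sup_of_le_left hJ).symm).trans
    (Ideal.quotientKerAlgEquivOfSurjective (f := (Ideal.Quotient.mkₐ R (J.map f)).comp f)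
      ((Ideal.Quotient.mkₐ_surjective R (J.map f)).comp hf))

theorem Polynomial.ker_quotientMk_comp_mapRingHom {R S : Type*} [CommRing R] [CommRing S]
    {f : R →+* S} (hf : Function.Surjective f) (W : R[X]) :
    RingHom.ker ((Ideal.Quotient.mk (Ideal.span {W.map f})).comp (mapRingHom f)) =
      Ideal.span {W} ⊔ (RingHom.ker f).map C := by
  rw [← RingHom.comap_ker, Ideal.mk_ker, ← coe_mapRingHom, ← Set.image_singleton, ← Ideal.map_span,
    Ideal.comap_map_of_surjective _ (map_surjective f hf), ← RingHom.ker_eq_comap_bot,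
    ker_mapRingHom]

namespace IsLocalRing

variable {R : Type*} [CommRing R] [IsLocalRing R] {π : R}

theorem ker_quotientMk_comp_mapRingHom_residue (hπ : maximalIdeal R = Ideal.span {π})
    (W : R[X]) :
    RingHom.ker ((Ideal.Quotient.mk (Ideal.span {W.map (residue R)})).comp
      (mapRingHom (residue R))) = Ideal.span {C π, W} := by
  rw [ker_quotientMk_comp_mapRingHom residue_surjective, ker_residue, hπ, Ideal.map_span,
    Set.image_singleton, Ideal.span_insert, sup_comm]

noncomputable def quotientSpanEquivResidueFieldQuotient (hπ : maximalIdeal R = Ideal.span {π})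
    (W : R[X]) :
    (R[X] ⧸ Ideal.span {C π, W}) ≃ₐ[R] (ResidueField R)[X] ⧸ Ideal.span {W.map (residue R)} :=
  (Ideal.quotientEquivAlgOfEq R (ker_quotientMk_comp_mapRingHom_residue hπ W)).symm.trans
    (Ideal.quotientKerAlgEquivOfSurjective
      (f := (Ideal.Quotient.mkₐ R _).comp (mapAlgHom (Algebra.ofId R (ResidueField R))))
      ((Ideal.Quotient.mkₐ_surjective R _).comp (map_surjective _ residue_surjective)))

end IsLocalRing

namespace Algebra

variable {R S : Type*} [CommRing R] [CommRing S] [Algebra R S]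

theorem aeval_self_adjoin_singleton_surjective (x : S) :
    Function.Surjective (aeval (R := R) (⟨x, self_mem_adjoin_singleton R x⟩ : adjoin R {x})) := by
  rintro ⟨y, hy⟩
  rw [adjoin_singleton_eq_range_aeval] at hy
  obtain ⟨f, rfl⟩ := hy
  exact ⟨f, Subtype.ext (Subalgebra.aeval_coe _ _ f).symm⟩

theorem ker_aeval_self_adjoin_singleton [IsDomain R] [IsIntegrallyClosed R] [IsDomain S]
    [Module.IsTorsionFree R S] {x : S} (hx : IsIntegral R x) :
    RingHom.ker (aeval (⟨x, self_mem_adjoin_singleton R x⟩ : adjoin R {x})) =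
      Ideal.span {minpoly R x} := by
  ext f
  rw [RingHom.mem_ker, Ideal.mem_span_singleton, ← minpoly.isIntegrallyClosed_dvd_iff hx,
    ← Subalgebra.coe_eq_zero, ← Subalgebra.aeval_coe]

noncomputable def quotientEquivAdjoinSingletonQuotient [IsDomain R] [IsIntegrallyClosed R]
    [IsDomain S] [Module.IsTorsionFree R S] {x : S} (hx : IsIntegral R x) {J : Ideal R[X]}
    (hJ : minpoly R x ∈ J) :
    (R[X] ⧸ J) ≃ₐ[R]
      adjoin R {x} ⧸ J.map (aeval (⟨x, self_mem_adjoin_singleton R x⟩ : adjoin R {x})) :=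
  Ideal.quotientEquivQuotientMap (aeval_self_adjoin_singleton_surjective x) <| by
    rw [ker_aeval_self_adjoin_singleton hx, Ideal.span_le, Set.singleton_subset_iff]
    exact hJ

end Algebra

noncomputable def Polynomial.Monic.quotientSpanEquivFun {R : Type*} [CommRing R] {g : R[X]}
    (hg : g.Monic) : (R[X] ⧸ Ideal.span {g}) ≃ₗ[R] (Fin g.natDegree → R) :=
  (AdjoinRoot.powerBasis' hg).basis.equivFun

theorem stmt14_general (R : Type*) [CommRing R] [IsDomain R] [IsDiscreteValuationRing R]
    (π : R) (hπ : Irreducible π)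
    (K L : Type*) [Field K] [Field L] [Algebra R K] [IsFractionRing R K]
    [Algebra K L] [Algebra R L] [IsScalarTower R K L]
    (α : L) (hα : IsIntegral R α)
    (P : R[X]) (hP : P = minpoly R α)
    (W : R[X]) (hW : W.Monic)
    (hWP : W.map (IsLocalRing.residue R) ∣ P.map (IsLocalRing.residue R))
    (A : Subalgebra R L) (hA : A = Algebra.adjoin R {α})
    (M : Submodule R L)
    (hM : M = Subalgebra.toSubmodule A ⊔
      Submodule.map (LinearMap.mulLeft R (aeval α W * (algebraMap R L π)⁻¹))
        (Subalgebra.toSubmodule A)) :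
    Nonempty ((↥(Subalgebra.toSubmodule A) ⧸
        Submodule.comap (Subalgebra.toSubmodule A).subtype
          (Submodule.map (LinearMap.mulLeft R (algebraMap R L π)) M)) ≃ₗ[R]
      (Polynomial (IsLocalRing.ResidueField R) ⧸
        Ideal.span {W.map (IsLocalRing.residue R)})) ∧
    Nonempty ((↥(Subalgebra.toSubmodule A) ⧸
        Submodule.comap (Subalgebra.toSubmodule A).subtype
          (Submodule.map (LinearMap.mulLeft R (algebraMap R L π)) M)) ≃ₗ[R]
      (Fin W.natDegree → IsLocalRing.ResidueField R)) := by
  subst hA hP hM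
  have : FaithfulSMul R L := (faithfulSMul_iff_algebraMap_injective R L).2 <| by
    rw [IsScalarTower.algebraMap_eq R K L]
    exact (algebraMap K L).injective.comp (IsFractionRing.injective R K)
  have hπL : algebraMap R L π ≠ 0 :=
    (map_ne_zero_iff _ (FaithfulSMul.algebraMap_injective R L)).2 hπ.ne_zero
  let x : Algebra.adjoin R {α} := ⟨α, Algebra.self_mem_adjoin_singleton R α⟩
  have hmem : minpoly R α ∈ Ideal.span {C π, W} := by
    rw [← IsLocalRing.ker_quotientMk_comp_mapRingHom_residue hπ.maximalIdeal_eq, RingHom.mem_ker,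
      RingHom.comp_apply, Ideal.Quotient.eq_zero_iff_mem, Ideal.mem_span_singleton]
    exact hWP
  have hmap : (Ideal.span {C π, W}).map (aeval x) =
      Ideal.span {⟨algebraMap R L π, Subalgebra.algebraMap_mem _ π⟩,
        ⟨aeval α W, Subalgebra.aeval_coe _ x W ▸ (aeval x W).2⟩} := by
    rw [Ideal.map_span, Set.image_pair, aeval_C]
    congr 3
    exact Subtype.ext (Subalgebra.aeval_coe _ x W).symm
  rw [Submodule.map_mulLeft_sup_map_mulLeft_mul_inv _ hπL]
  let e := Submodule.Quotient.equiv _ _ _ (Subalgebra.map_comap_subtype_mulLeft_sup _ _ _) ≪≫ₗ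
    Submodule.Quotient.restrictScalarsEquiv R _ ≪≫ₗ
    ((Ideal.quotientEquivAlgOfEq R hmap).symm.trans
      ((Algebra.quotientEquivAdjoinSingletonQuotient hα hmem).symm.trans
        (IsLocalRing.quotientSpanEquivResidueFieldQuotient hπ.maximalIdeal_eq W))).toLinearEquiv
  let e' := (hW.map (IsLocalRing.residue R)).quotientSpanEquivFun.trans
    (LinearEquiv.funCongrLeft _ _ (finCongr (hW.natDegree_map _).symm))
  exact ⟨⟨e⟩, ⟨e ≪≫ₗ e'.restrictScalars R⟩⟩

/-- Let `R` be a DVR with maximal ideal `𝔭 = πR` and residue field `k`, `α`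
integral over `R` with monic minimal polynomial `P` of degree `n`, `A = R[α]`, and `W ∈ R[X]`
monic of degree `m` with `W̄ ∣ P̄` in `k[X]`.  With `M = A + (W(α)/π)A` (so
`πM = πA + W(α)A`), the `R`-module `A ⧸ πM` is isomorphic to `k[X] ⧸ (W̄)`, which is in turn
isomorphic to `k^m`. -/
theorem stmt14 (R : Type*) [CommRing R] [IsDomain R] [IsDiscreteValuationRing R]
    (π : R) (hπ : Irreducible π)
    (K L : Type*) [Field K] [Field L] [Algebra R K] [IsFractionRing R K]
    [Algebra K L] [Algebra R L] [IsScalarTower R K L]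
    [FiniteDimensional K L] [Algebra.IsSeparable K L]
    (α : L) (hα : IsIntegral R α) (hgen : Algebra.adjoin K {α} = ⊤)
    (P : R[X]) (hP : P = minpoly R α)
    (W : R[X]) (hW : W.Monic)
    (hWP : W.map (IsLocalRing.residue R) ∣ P.map (IsLocalRing.residue R))
    (A : Subalgebra R L) (hA : A = Algebra.adjoin R {α})
    (M : Submodule R L)
    (hM : M = Subalgebra.toSubmodule A ⊔
      Submodule.map (LinearMap.mulLeft R (aeval α W * (algebraMap R L π)⁻¹))
        (Subalgebra.toSubmodule A)) :
    Nonempty ((↥(Subalgebra.toSubmodule A) ⧸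
        Submodule.comap (Subalgebra.toSubmodule A).subtype
          (Submodule.map (LinearMap.mulLeft R (algebraMap R L π)) M)) ≃ₗ[R]
      (Polynomial (IsLocalRing.ResidueField R) ⧸
        Ideal.span {W.map (IsLocalRing.residue R)})) ∧
    Nonempty ((↥(Subalgebra.toSubmodule A) ⧸
        Submodule.comap (Subalgebra.toSubmodule A).subtype
          (Submodule.map (LinearMap.mulLeft R (algebraMap R L π)) M)) ≃ₗ[R]
      (Fin W.natDegree → IsLocalRing.ResidueField R)) :=
  stmt14_general R π hπ K L α hα P hP W hW hWP A hA M hM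
end
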